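/- arXiv:1603.02497 — 6 statements merged into one kernel-verified Lean document; each statement's English description precedes it below -/
import Mathlib

section
/- Let τ ∈ {-∞} ∪ ℝ, let I = (τ,∞), and let B : I → ℝ^{d×d} be a bounded continuous matrix-valued function. Suppose there exists δ > 0 such that for all t ∈ I and all i: B(t)_{ii} < 0, B(t)_{ij} ≥ 0 for all j ≠ i, and Σ_{j=1}^{d} B(t)_{ij} ≤ -δ (strict row diagonal dominance). Then the system ẋ = B(t)x is exponentially stable: there exist constants K ≥ 1 and γ > 0 such that every differentiable function x : I → ℝ^d satisfying ẋ(t) = B(t)x(t) for all t ∈ I obeys ‖x(t)‖ ≤ K e^{-γ(t-t₀)} ‖x(t₀)‖ for all t ≥ t₀ > τ. -/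
open Set Filter Topology Matrix

/-! In the sup norm, nonnegative off-diagonal entries and row sums at most `-δ` bound the
logarithmic norm of `B t` by `-δ`: for small `h > 0` the matrix `1 + h • B t` is entrywise
nonnegative with row sums at most `1 - h * δ`, so `‖w + h • B t *ᵥ w‖ ≤ (1 - h * δ) * ‖w‖`.
Along a solution the upper right Dini derivative of `‖x t‖` is therefore at most `-δ * ‖x t‖`,
and Grönwall's inequality gives `‖x t‖ ≤ exp (-δ * (t - t₀)) * ‖x t₀‖`, i.e. `K = 1`, `γ = δ`. -/

theorem Matrix.norm_mulVec_le_of_nonneg_of_sum_le {m n : Type*} [Fintype m] [Fintype n]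
    {P : Matrix m n ℝ} {ρ : ℝ} (hP : ∀ i j, 0 ≤ P i j) (hrow : ∀ i, ∑ j, P i j ≤ ρ)
    (hρ : 0 ≤ ρ) (w : n → ℝ) : ‖P *ᵥ w‖ ≤ ρ * ‖w‖ := by
  refine (pi_norm_le_iff_of_nonneg (mul_nonneg hρ (norm_nonneg w))).2 fun i => ?_
  calc ‖(P *ᵥ w) i‖ = |∑ j, P i j * w j| := rfl
    _ ≤ ∑ j, |P i j * w j| := Finset.abs_sum_le_sum_abs _ _
    _ ≤ ∑ j, P i j * ‖w‖ := Finset.sum_le_sum fun j _ => by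
        rw [abs_mul, abs_of_nonneg (hP i j)]
        exact mul_le_mul_of_nonneg_left (norm_le_pi_norm w j) (hP i j)
    _ = (∑ j, P i j) * ‖w‖ := (Finset.sum_mul _ _ _).symm
    _ ≤ ρ * ‖w‖ := mul_le_mul_of_nonneg_right (hrow i) (norm_nonneg w)

theorem Matrix.eventually_norm_add_smul_mulVec_le {n : Type*} [Fintype n]
    {A : Matrix n n ℝ} {μ : ℝ} (hoff : ∀ i j, i ≠ j → 0 ≤ A i j) (hrow : ∀ i, ∑ j, A i j ≤ μ)
    (w : n → ℝ) : ∀ᶠ h in 𝓝[>] (0 : ℝ), ‖w + h • A *ᵥ w‖ ≤ (1 + h * μ) * ‖w‖ := by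
  classical
  have hdiag : ∀ᶠ h in 𝓝 (0 : ℝ), ∀ i, 0 < 1 + h * A i i :=
    eventually_all.2 fun i => continuousAt_const.eventually_lt (by fun_prop) (by simp)
  have hρ : ∀ᶠ h in 𝓝 (0 : ℝ), 0 < 1 + h * μ :=
    continuousAt_const.eventually_lt (by fun_prop) (by simp)
  filter_upwards [nhdsWithin_le_nhds hdiag, nhdsWithin_le_nhds hρ, self_mem_nhdsWithin]
    with h hdiag hρ (hh : 0 < h)
  have hP : ∀ i j, 0 ≤ (1 + h • A) i j := by
    intro i j
    rcases eq_or_ne i j with rfl | hij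
    · simpa using (hdiag i).le
    · simpa [Matrix.one_apply_ne hij] using mul_nonneg hh.le (hoff i j hij)
  have hrowP : ∀ i, ∑ j, (1 + h • A) i j ≤ 1 + h * μ := by
    intro i
    simpa [Matrix.one_apply, Finset.sum_add_distrib, ← Finset.mul_sum] using
      mul_le_mul_of_nonneg_left (hrow i) hh.le
  have hstep : w + h • A *ᵥ w = (1 + h • A) *ᵥ w := by
    rw [Matrix.add_mulVec, Matrix.one_mulVec, Matrix.smul_mulVec]
  rw [hstep]
  exact Matrix.norm_mulVec_le_of_nonneg_of_sum_le hP hrowP hρ.le w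

theorem eventually_slope_norm_lt_of_norm_add_smul_le {E : Type*} [NormedAddCommGroup E]
    [NormedSpace ℝ E] {x : ℝ → E} {v : E} {t μ r : ℝ} (hx : HasDerivWithinAt x v (Ioi t) t)
    (hstep : ∀ᶠ h in 𝓝[>] (0 : ℝ), ‖x t + h • v‖ ≤ (1 + h * μ) * ‖x t‖)
    (hr : μ * ‖x t‖ < r) : ∀ᶠ z in 𝓝[>] t, slope (fun s => ‖x s‖) t z < r := by
  set ε := (r - μ * ‖x t‖) / 2
  have hε : 0 < ε := by simp only [ε]; linarith
  have hlin : ∀ᶠ z in 𝓝[>] t, ‖x z - x t - (z - t) • v‖ ≤ ε * ‖z - t‖ :=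
    (hasDerivWithinAt_iff_isLittleO.1 hx).def hε
  have hshift : Tendsto (fun z => z - t) (𝓝[>] t) (𝓝[>] 0) :=
    tendsto_nhdsWithin_of_tendsto_nhds_of_eventually_within _
      ((continuous_sub_right t).tendsto' t 0 (sub_self t) |>.mono_left nhdsWithin_le_nhds)
      (eventually_mem_nhdsWithin.mono fun _ hz => sub_pos.2 (mem_Ioi.1 hz))
  filter_upwards [hlin, hshift.eventually hstep, self_mem_nhdsWithin] with z hlin hstep hz
  have hpos : 0 < z - t := sub_pos.2 hz
  have hxz : ‖x z‖ ≤ (1 + (z - t) * μ) * ‖x t‖ + ε * (z - t) :=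
    calc ‖x z‖ = ‖(x t + (z - t) • v) + (x z - x t - (z - t) • v)‖ := by congr 1; abel
      _ ≤ ‖x t + (z - t) • v‖ + ‖x z - x t - (z - t) • v‖ := norm_add_le _ _
      _ ≤ (1 + (z - t) * μ) * ‖x t‖ + ε * (z - t) := by
        rw [Real.norm_eq_abs, abs_of_pos hpos] at hlin
        exact add_le_add hstep hlin
  have hgap : (μ * ‖x t‖ + ε) * (z - t) < r * (z - t) :=
    mul_lt_mul_of_pos_right (by simp only [ε]; linarith) hpos
  rw [slope_def_field, div_lt_iff₀ hpos]
  linarith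

theorem norm_le_exp_mul_norm_of_metzler {n : Type*} [Fintype n] {A : ℝ → Matrix n n ℝ}
    {x : ℝ → n → ℝ} {μ a b : ℝ} (hab : a ≤ b)
    (hx : ∀ s ∈ Icc a b, HasDerivAt x (A s *ᵥ x s) s)
    (hoff : ∀ s ∈ Icc a b, ∀ i j, i ≠ j → 0 ≤ A s i j)
    (hrow : ∀ s ∈ Icc a b, ∀ i, ∑ j, A s i j ≤ μ) :
    ‖x b‖ ≤ Real.exp (μ * (b - a)) * ‖x a‖ := by
  have hslope : ∀ s ∈ Ico a b, ∀ r, μ * ‖x s‖ < r →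
      ∃ᶠ z in 𝓝[>] s, (z - s)⁻¹ * (‖x z‖ - ‖x s‖) < r := fun s hs r hr =>
    (eventually_slope_norm_lt_of_norm_add_smul_le (hx s (Ico_subset_Icc_self hs)).hasDerivWithinAt
      (Matrix.eventually_norm_add_smul_mulVec_le (hoff s (Ico_subset_Icc_self hs))
        (hrow s (Ico_subset_Icc_self hs)) (x s)) hr).frequently
  have hcont : ContinuousOn (fun s => ‖x s‖) (Icc a b) := fun s hs =>
    (hx s hs).continuousAt.norm.continuousWithinAt
  have := le_gronwallBound_of_liminf_deriv_right_le hcont hslope le_rfl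
    (fun s _ => (add_zero _).ge) b ⟨hab, le_rfl⟩
  rwa [gronwallBound_ε0, mul_comm] at this

theorem stmt_0_general (d : ℕ) (τ : EReal)
    (B : ℝ → Matrix (Fin d) (Fin d) ℝ)
    (δ : ℝ) (hδ : 0 < δ)
    (hoff : ∀ t : ℝ, τ < (t : EReal) → ∀ i j : Fin d, i ≠ j → 0 ≤ B t i j)
    (hrow : ∀ t : ℝ, τ < (t : EReal) → ∀ i : Fin d, ∑ j, B t i j ≤ -δ) :
    ∃ K γ : ℝ, 1 ≤ K ∧ 0 < γ ∧
      ∀ x : ℝ → (Fin d → ℝ),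
        (∀ t : ℝ, τ < (t : EReal) → HasDerivAt x ((B t).mulVec (x t)) t) →
        ∀ t₀ t : ℝ, τ < (t₀ : EReal) → t₀ ≤ t →
          ‖x t‖ ≤ K * Real.exp (-γ * (t - t₀)) * ‖x t₀‖ := by
  refine ⟨1, δ, le_rfl, hδ, fun x hx t₀ t ht₀ ht => ?_⟩
  have hI : ∀ s ∈ Icc t₀ t, τ < (s : EReal) := fun s hs =>
    ht₀.trans_le (EReal.coe_le_coe_iff.2 hs.1)
  rw [one_mul]
  exact norm_le_exp_mul_norm_of_metzler ht (fun s hs => hx s (hI s hs))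
    (fun s hs => hoff s (hI s hs)) (fun s hs => hrow s (hI s hs))

/-- Let `τ ∈ {-∞} ∪ ℝ` (modeled as `τ : EReal` with `τ ≠ ⊤`), let `I = (τ,∞)`, and let
`B : I → ℝ^{d×d}` be a bounded continuous matrix-valued function.  Suppose there exists
`δ > 0` such that for all `t ∈ I` and all `i`: `B(t)_{ii} < 0`, `B(t)_{ij} ≥ 0` for `j ≠ i`,
and `∑ j, B(t)_{ij} ≤ -δ`.  Then `ẋ = B(t)x` is exponentially stable: there exist `K ≥ 1`
and `γ > 0` such that every solution `x` satisfies
`‖x t‖ ≤ K e^{-γ(t-t₀)} ‖x t₀‖` for all `t ≥ t₀ > τ`. -/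
theorem stmt_0 (d : ℕ) (τ : EReal) (hτ : τ ≠ ⊤)
    (B : ℝ → Matrix (Fin d) (Fin d) ℝ)
    (hBcont : ContinuousOn B {t : ℝ | τ < (t : EReal)})
    (hBbdd : ∃ C : ℝ, ∀ t : ℝ, τ < (t : EReal) → ∀ i j : Fin d, |B t i j| ≤ C)
    (δ : ℝ) (hδ : 0 < δ)
    (hdiag : ∀ t : ℝ, τ < (t : EReal) → ∀ i : Fin d, B t i i < 0)
    (hoff : ∀ t : ℝ, τ < (t : EReal) → ∀ i j : Fin d, i ≠ j → 0 ≤ B t i j)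
    (hrow : ∀ t : ℝ, τ < (t : EReal) → ∀ i : Fin d, ∑ j, B t i j ≤ -δ) :
    ∃ K γ : ℝ, 1 ≤ K ∧ 0 < γ ∧
      ∀ x : ℝ → (Fin d → ℝ),
        (∀ t : ℝ, τ < (t : EReal) → HasDerivAt x ((B t).mulVec (x t)) t) →
        ∀ t₀ t : ℝ, τ < (t₀ : EReal) → t₀ ≤ t →
          ‖x t‖ ≤ K * Real.exp (-γ * (t - t₀)) * ‖x t₀‖ :=
  stmt_0_general d τ B δ hδ hoff hrow
end

section
/- Let τ ∈ {-∞} ∪ ℝ, let I = (τ,∞), and let B : I → ℝ^{d×d} be a bounded continuous matrix-valued function. Suppose the index set {1,…,d} is partitioned into m consecutive blocks J₁,…,J_m (of sizes d₁,…,d_m with d₁+⋯+d_m = d) such that B(t)_{ij} = 0 whenever i ∈ J_p and j ∈ J_q with p < q (lower block triangular form), and suppose there exists δ > 0 such that for every block J_n, every t ∈ I, and every i ∈ J_n: B(t)_{ii} < 0, B(t)_{ij} ≥ 0 for all j ∈ J_n with j ≠ i, and Σ_{j ∈ J_n} B(t)_{ij} ≤ -δ. Then the system ẋ = B(t)x is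 exponentially stable: there exist K ≥ 1 and γ > 0 such that every differentiable x : I → ℝ^d with ẋ(t) = B(t)x(t) for all t ∈ I satisfies ‖x(t)‖ ≤ K e^{-γ(t-t₀)} ‖x(t₀)‖ for all t ≥ t₀ > τ. -/
/-!
Give the coordinates of block `p` the weight `M ^ p`, i.e. pass to `y = D⁻¹ x` with
`D = diag (M ^ π k)`. Then `ẏ = A(t) y` with `A = D⁻¹ B D`: the diagonal blocks of `B` are
unchanged, the blocks below them are damped by at least `1 / M`, and those above vanish. At a
time where the coordinate `i` realises the sup norm of `y`, the off-diagonal entries of the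
diagonal block are nonnegative, so `sign (y_i) ẏ_i` is at most the block row sum `≤ -δ` times
`‖y‖` plus an error `O(1 / M) ‖y‖`. For `M` large this is `≤ -(δ / 2) ‖y‖`, which forces the sup
norm of `y` to decay like `exp (-(δ / 2) t)`; undoing the weights costs the factor `M ^ m`.
-/

open Set Filter Topology Matrix

theorem sign_mul_le_abs (x c : ℝ) : SignType.sign x * c ≤ |c| := by
  rcases lt_trichotomy x 0 with hx | rfl | hx
  · simpa [hx] using neg_le_abs c
  · simp
  · simpa [hx] using le_abs_self c

theorem exists_frequently_norm_eq_norm_apply {α ι E : Type*} [Fintype ι] [Nonempty ι]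
    [SeminormedAddCommGroup E] {l : Filter α} [l.NeBot] (f : α → ι → E) :
    ∃ i, ∃ᶠ z in l, ‖f z‖ = ‖f z i‖ := by
  by_contra! h
  obtain ⟨z, hz⟩ := (eventually_all.2 h).exists
  obtain ⟨i, hi⟩ := (IsGreatest.pi_norm (f z)).1
  exact hz i hi.symm

theorem frequently_slope_pi_norm_lt {ι : Type*} [Fintype ι] {y : ℝ → ι → ℝ} {v : ι → ℝ}
    {x r : ℝ} (hy : HasDerivAt y v x) (hx : y x ≠ 0)
    (hr : ∀ i, |y x i| = ‖y x‖ → SignType.sign (y x i) * v i < r) :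
    ∃ᶠ z in 𝓝[>] x, slope (fun t => ‖y t‖) x z < r := by
  have : Nonempty ι := not_isEmpty_iff.1 fun _ => hx (Subsingleton.elim _ _)
  obtain ⟨i, hi⟩ := exists_frequently_norm_eq_norm_apply (l := 𝓝[>] x) y
  simp only [Real.norm_eq_abs] at hi
  have hyi : HasDerivAt (fun t => y t i) (v i) x := hasDerivAt_pi.1 hy i
  have hix : ‖y x‖ = |y x i| :=
    tendsto_nhds_unique_of_frequently_eq
      (hy.continuousAt.norm.tendsto.mono_left nhdsWithin_le_nhds)
      (hyi.continuousAt.abs.tendsto.mono_left nhdsWithin_le_nhds) hi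
  have hyxi : y x i ≠ 0 := fun h => hx (norm_eq_zero.1 (hix.trans (by simp [h])))
  have habs := ((hasDerivAt_abs hyxi).comp x hyi).hasDerivWithinAt (s := Ioi x)
  refine (hi.and_eventually (habs.limsup_slope_le' (lt_irrefl x) (hr i hix.symm))).mono ?_
  rintro z ⟨hz, hslope⟩
  simpa only [slope_def_field, hz, hix, Function.comp_apply] using hslope

section SupNormDecay

variable {ι : Type*} [Fintype ι] {y v : ℝ → ι → ℝ} {a b μ : ℝ}

theorem pi_norm_le_add_mul_exp_of_lt {μ' ε : ℝ} (hμ : μ < μ') (hε : 0 < ε)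
    (hy : ∀ t ∈ Icc a b, HasDerivAt y (v t) t)
    (hv : ∀ t ∈ Ico a b, ∀ i, |y t i| = ‖y t‖ → SignType.sign (y t i) * v t i ≤ μ * ‖y t‖) :
    ∀ t ∈ Icc a b, ‖y t‖ ≤ (‖y a‖ + ε) * Real.exp (μ' * (t - a)) := by
  set B : ℝ → ℝ := fun t => (‖y a‖ + ε) * Real.exp (μ' * (t - a))
  have hB : ∀ t, HasDerivAt B (μ' * B t) t := fun t => by
    have := ((((hasDerivAt_id t).sub_const a).const_mul μ').exp).const_mul (‖y a‖ + ε)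
    simp only [id, mul_one] at this
    exact this.congr_deriv (by simp only [B]; ring)
  have hBpos : ∀ t, 0 < B t := fun t => by positivity
  -- At zeros of `y` only the crude Dini bound `‖v t‖` is available; the barrier `B` is
  -- positive, so the norm never touches it there.
  refine image_le_of_liminf_slope_right_lt_deriv_boundary (f := fun t => ‖y t‖)
    (f' := fun t => if y t = 0 then ‖v t‖ else μ * ‖y t‖)
    (fun t ht => (hy t ht).continuousAt.norm.continuousWithinAt) ?_
    (by simp [hε.le]) hB ?_
  · intro t ht r hr
    by_cases h0 : y t = 0
    · rw [if_pos h0] at hr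
      exact (hy t (Ico_subset_Icc_self ht)).hasDerivWithinAt.liminf_right_slope_norm_le hr
    · rw [if_neg h0] at hr
      exact frequently_slope_pi_norm_lt (hy t (Ico_subset_Icc_self ht)) h0
        fun i hi => (hv t ht i hi).trans_lt hr
  · intro t _ hfB
    change ‖y t‖ = B t at hfB
    have h0 : y t ≠ 0 := fun h => (hBpos t).ne' (by rw [← hfB, h, norm_zero])
    rw [if_neg h0, ← hfB]
    exact mul_lt_mul_of_pos_right hμ (norm_pos_iff.2 h0)

theorem pi_norm_le_exp_mul_of_sign_mul_le
    (hy : ∀ t ∈ Icc a b, HasDerivAt y (v t) t)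
    (hv : ∀ t ∈ Ico a b, ∀ i, |y t i| = ‖y t‖ → SignType.sign (y t i) * v t i ≤ μ * ‖y t‖) :
    ∀ t ∈ Icc a b, ‖y t‖ ≤ Real.exp (μ * (t - a)) * ‖y a‖ := by
  -- The fencing argument needs a strict margin, so let both the rate and the initial bound
  -- approach their limits.
  intro t ht
  have hlim : Tendsto (fun ε => (‖y a‖ + ε) * Real.exp ((μ + ε) * (t - a))) (𝓝[>] 0)
      (𝓝 (Real.exp (μ * (t - a)) * ‖y a‖)) := by
    have hcont : Continuous fun ε : ℝ => (‖y a‖ + ε) * Real.exp ((μ + ε) * (t - a)) := by fun_prop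
    simpa [mul_comm] using (hcont.tendsto 0).mono_left nhdsWithin_le_nhds
  exact ge_of_tendsto hlim <| eventually_nhdsWithin_of_forall fun ε hε =>
    pi_norm_le_add_mul_exp_of_lt (lt_add_of_pos_right μ hε) hε hy hv t ht

end SupNormDecay

theorem diagonal_inv_mul_mul_diagonal_mulVec {ι 𝕜 : Type*} [Fintype ι] [DecidableEq ι] [Field 𝕜]
    (B : Matrix ι ι 𝕜) {W : ι → 𝕜} (hW : ∀ k, W k ≠ 0) (x : ι → 𝕜) :
    (diagonal W⁻¹ * B * diagonal W) *ᵥ (W⁻¹ * x) = W⁻¹ * (B *ᵥ x) := by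
  have : diagonal W *ᵥ (W⁻¹ * x) = x := by
    ext k
    simp [mulVec_diagonal, hW k]
  rw [← mulVec_mulVec, ← mulVec_mulVec, this]
  ext k
  simp [mulVec_diagonal]

section RowBounds

variable {ι : Type*} [Fintype ι] [DecidableEq ι]

theorem sign_mul_mulVec_apply_le (A : Matrix ι ι ℝ) {y : ι → ℝ} {i : ι} {S : Finset ι}
    (hi : |y i| = ‖y‖) (hiS : i ∈ S) (hS : ∀ j ∈ S, j ≠ i → 0 ≤ A i j) :
    SignType.sign (y i) * (A *ᵥ y) i ≤ (∑ j ∈ S, A i j + ∑ j ∈ Sᶜ, |A i j|) * ‖y‖ := by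
  have hy : ∀ j, |y j| ≤ ‖y‖ := fun j => by simpa using norm_le_pi_norm y j
  have hin : ∀ j ∈ S, SignType.sign (y i) * (A i j * y j) ≤ A i j * ‖y‖ := by
    intro j hj
    rw [mul_left_comm]
    rcases eq_or_ne j i with rfl | hji
    · rw [sign_mul_self, hi]
    · exact mul_le_mul_of_nonneg_left ((sign_mul_le_abs _ _).trans (hy j)) (hS j hj hji)
  have hout : ∀ j, SignType.sign (y i) * (A i j * y j) ≤ |A i j| * ‖y‖ := fun j =>
    (sign_mul_le_abs _ _).trans <| by
      rw [abs_mul]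
      exact mul_le_mul_of_nonneg_left (hy j) (abs_nonneg _)
  rw [mulVec, dotProduct, Finset.mul_sum, ← Finset.sum_add_sum_compl S, add_mul,
    Finset.sum_mul, Finset.sum_mul]
  exact add_le_add (Finset.sum_le_sum hin) (Finset.sum_le_sum fun j _ => hout j)

variable {κ : Type*} [LinearOrder κ]

theorem sign_mul_diagonal_conj_mulVec_apply_le (B : Matrix ι ι ℝ) (π : ι → κ) {w : κ → ℝ}
    {M : ℝ} (hM : 0 < M) (hw : ∀ p, 0 < w p) (hwM : ∀ p q, p < q → M * w p ≤ w q)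
    (htri : ∀ i j, π i < π j → B i j = 0) (hoff : ∀ i j, i ≠ j → π i = π j → 0 ≤ B i j)
    {y : ι → ℝ} {i : ι} (hi : |y i| = ‖y‖) :
    SignType.sign (y i) * ((diagonal (w ∘ π)⁻¹ * B * diagonal (w ∘ π)) *ᵥ y) i ≤
      (∑ j ∈ Finset.univ.filter (fun j => π j = π i), B i j + M⁻¹ * ∑ j, |B i j|) * ‖y‖ := by
  set A := diagonal (w ∘ π)⁻¹ * B * diagonal (w ∘ π)
  have hA : ∀ j, A i j = (w (π i))⁻¹ * B i j * w (π j) := fun j => by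
    simp [A, diagonal_mul, mul_diagonal]
  set S := Finset.univ.filter (fun j => π j = π i)
  have hS : ∀ j ∈ S, A i j = B i j := fun j hj => by
    rw [hA, (Finset.mem_filter.1 hj).2, mul_comm, ← mul_assoc, mul_inv_cancel₀ (hw _).ne', one_mul]
  have hSc : ∀ j ∈ Sᶜ, |A i j| ≤ M⁻¹ * |B i j| := fun j hj => by
    have hji : π j ≠ π i := by simpa [S] using hj
    rcases hji.lt_or_gt with hlt | hgt
    · calc |A i j| = w (π j) / w (π i) * |B i j| := by
            rw [hA, abs_mul, abs_mul, abs_of_pos (hw _), abs_of_pos (inv_pos.2 (hw _))]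
            ring
        _ ≤ M⁻¹ * |B i j| := by
            gcongr
            rw [div_le_iff₀ (hw _), le_inv_mul_iff₀ hM]
            exact hwM _ _ hlt
    · rw [hA, htri i j hgt]
      simp
  refine (sign_mul_mulVec_apply_le A (S := S) hi (Finset.mem_filter.2 ⟨Finset.mem_univ _, rfl⟩)
    fun j hj hji => ?_).trans ?_
  · rw [hS j hj]
    exact hoff i j hji.symm (Finset.mem_filter.1 hj).2.symm
  · rw [Finset.sum_congr rfl hS, Finset.mul_sum]
    gcongr
    exact (Finset.sum_le_sum hSc).trans
      (Finset.sum_le_sum_of_subset_of_nonneg (Finset.subset_univ _) fun _ _ _ => by positivity)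

end RowBounds

theorem norm_le_norm_mul_exp_mul_of_diagonal_conj {ι : Type*} [Fintype ι] [DecidableEq ι]
    {A : ℝ → Matrix ι ι ℝ} {x : ℝ → ι → ℝ} {W : ι → ℝ} {a b μ : ℝ} (hW : ∀ k, 1 ≤ W k)
    (hx : ∀ t ∈ Icc a b, HasDerivAt x (A t *ᵥ x t) t)
    (hA : ∀ t ∈ Ico a b, ∀ (y : ι → ℝ) i, |y i| = ‖y‖ →
      SignType.sign (y i) * ((diagonal W⁻¹ * A t * diagonal W) *ᵥ y) i ≤ μ * ‖y‖) :
    ∀ t ∈ Icc a b, ‖x t‖ ≤ ‖W‖ * Real.exp (μ * (t - a)) * ‖x a‖ := by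
  intro t ht
  have hW0 : ∀ k, W k ≠ 0 := fun k => (zero_lt_one.trans_le (hW k)).ne'
  have hWinv : ‖W⁻¹‖ ≤ 1 := (pi_norm_le_iff_of_nonneg zero_le_one).2 fun k => by
    rw [Pi.inv_apply, norm_inv, Real.norm_eq_abs, abs_of_pos (zero_lt_one.trans_le (hW k))]
    exact inv_le_one_of_one_le₀ (hW k)
  have hdecay := pi_norm_le_exp_mul_of_sign_mul_le (y := fun s => W⁻¹ * x s)
    (v := fun s => W⁻¹ * (A s *ᵥ x s)) (fun s hs => (hx s hs).const_mul W⁻¹)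
    (fun s hs i hi => by
      rw [← diagonal_inv_mul_mul_diagonal_mulVec _ hW0]
      exact hA s hs _ i hi) t ht
  calc ‖x t‖ = ‖W * (W⁻¹ * x t)‖ := by
        congr 1
        ext k
        simp [hW0 k]
    _ ≤ ‖W‖ * (Real.exp (μ * (t - a)) * ‖W⁻¹ * x a‖) :=
        (norm_mul_le _ _).trans (by gcongr)
    _ ≤ ‖W‖ * Real.exp (μ * (t - a)) * ‖x a‖ := by
        rw [mul_assoc]
        gcongr
        exact (norm_mul_le _ _).trans (mul_le_of_le_one_left (norm_nonneg _) hWinv)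

theorem stmt_1_general (d m : ℕ) (τ : EReal)
    (B : ℝ → Matrix (Fin d) (Fin d) ℝ)
    (hBbdd : ∃ C : ℝ, ∀ t : ℝ, τ < (t : EReal) → ∀ i j : Fin d, |B t i j| ≤ C)
    (π : Fin d → Fin m)
    (htri : ∀ t : ℝ, τ < (t : EReal) → ∀ i j : Fin d, π i < π j → B t i j = 0)
    (δ : ℝ) (hδ : 0 < δ)
    (hoff : ∀ t : ℝ, τ < (t : EReal) → ∀ i j : Fin d, i ≠ j → π i = π j → 0 ≤ B t i j)
    (hrow : ∀ t : ℝ, τ < (t : EReal) → ∀ i : Fin d,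
      ∑ j ∈ Finset.univ.filter (fun j => π j = π i), B t i j ≤ -δ) :
    ∃ K γ : ℝ, 1 ≤ K ∧ 0 < γ ∧
      ∀ x : ℝ → (Fin d → ℝ),
        (∀ t : ℝ, τ < (t : EReal) → HasDerivAt x ((B t).mulVec (x t)) t) →
        ∀ t₀ t : ℝ, τ < (t₀ : EReal) → t₀ ≤ t →
          ‖x t‖ ≤ K * Real.exp (-γ * (t - t₀)) * ‖x t₀‖ := by
  obtain ⟨C, hC⟩ := hBbdd
  set M : ℝ := max 1 (2 * d * C / δ)
  have hM : 1 ≤ M := le_max_left _ _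
  have hMC : M⁻¹ * (d * C) ≤ δ / 2 := by
    rw [inv_mul_le_iff₀ (by linarith)]
    calc (d : ℝ) * C = 2 * d * C / δ * (δ / 2) := by field_simp
      _ ≤ M * (δ / 2) := by gcongr; exact le_max_right _ _
  set w : Fin m → ℝ := fun p => M ^ (p : ℕ)
  have hw : ∀ p, 1 ≤ w p := fun p => one_le_pow₀ hM
  have hwM : ∀ p q, p < q → M * w p ≤ w q := fun p q hpq => by
    simpa [w, pow_succ'] using pow_le_pow_right₀ hM (Nat.succ_le_of_lt hpq)
  have hwπ : ‖w ∘ π‖ ≤ M ^ m := (pi_norm_le_iff_of_nonneg (by positivity)).2 fun k => by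
    rw [Function.comp_apply, Real.norm_eq_abs, abs_of_pos (zero_lt_one.trans_le (hw _))]
    exact pow_le_pow_right₀ hM (π k).isLt.le
  refine ⟨M ^ m, δ / 2, one_le_pow₀ hM, by positivity, fun x hx t₀ t ht₀ ht => ?_⟩
  have hI : ∀ s ∈ Icc t₀ t, τ < s := fun s hs => ht₀.trans_le (EReal.coe_le_coe_iff.2 hs.1)
  refine (norm_le_norm_mul_exp_mul_of_diagonal_conj (W := w ∘ π) (fun k => hw (π k))
    (fun s hs => hx s (hI s hs)) (fun s hs y i hi => ?_) t ⟨ht, le_rfl⟩).trans (by gcongr)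
  have hs := hI s (Ico_subset_Icc_self hs)
  have hsum : M⁻¹ * ∑ j, |B s i j| ≤ M⁻¹ * (d * C) := by
    gcongr
    simpa using Finset.sum_le_card_nsmul Finset.univ _ C fun j _ => hC s hs i j
  refine (sign_mul_diagonal_conj_mulVec_apply_le (B s) π (zero_lt_one.trans_le hM)
    (fun p => zero_lt_one.trans_le (hw p)) hwM (htri s hs) (hoff s hs) hi).trans ?_
  gcongr
  linarith [hrow s hs i]

/-- Block lower triangular nonautonomous system with strictly row diagonally dominant
diagonal blocks is exponentially stable.  The partition of `{1,…,d}` into `m` consecutive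
blocks `J₁,…,J_m` is modeled by a monotone surjective map `π : Fin d → Fin m`; the block
of an index `i` is `π ⁻¹' {π i}`. -/
theorem stmt_1 (d m : ℕ) (τ : EReal) (hτ : τ ≠ ⊤)
    (B : ℝ → Matrix (Fin d) (Fin d) ℝ)
    (hBcont : ContinuousOn B {t : ℝ | τ < (t : EReal)})
    (hBbdd : ∃ C : ℝ, ∀ t : ℝ, τ < (t : EReal) → ∀ i j : Fin d, |B t i j| ≤ C)
    (π : Fin d → Fin m) (hπmono : Monotone π) (hπsurj : Function.Surjective π)
    (htri : ∀ t : ℝ, τ < (t : EReal) → ∀ i j : Fin d, π i < π j → B t i j = 0)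
    (δ : ℝ) (hδ : 0 < δ)
    (hdiag : ∀ t : ℝ, τ < (t : EReal) → ∀ i : Fin d, B t i i < 0)
    (hoff : ∀ t : ℝ, τ < (t : EReal) → ∀ i j : Fin d, i ≠ j → π i = π j → 0 ≤ B t i j)
    (hrow : ∀ t : ℝ, τ < (t : EReal) → ∀ i : Fin d,
      ∑ j ∈ Finset.univ.filter (fun j => π j = π i), B t i j ≤ -δ) :
    ∃ K γ : ℝ, 1 ≤ K ∧ 0 < γ ∧
      ∀ x : ℝ → (Fin d → ℝ),
        (∀ t : ℝ, τ < (t : EReal) → HasDerivAt x ((B t).mulVec (x t)) t) →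
        ∀ t₀ t : ℝ, τ < (t₀ : EReal) → t₀ ≤ t →
          ‖x t‖ ≤ K * Real.exp (-γ * (t - t₀)) * ‖x t₀‖ :=
  stmt_1_general d m τ B hBbdd π htri δ hδ hoff hrow
end

section
/- Let I ⊆ ℝ be an open interval, let B : I → ℝ^{d×d} and s : I → ℝ^d be continuous, let t₀ ∈ I and x₀ ∈ ℝ^d, and let Φ : I × I → ℝ^{d×d} be the transition operator of ẋ = B(t)x, i.e., for each u ∈ I the function t ↦ Φ(t,u) is differentiable with ∂_t Φ(t,u) = B(t)Φ(t,u) and Φ(u,u) = Id. Then the function φ(t) := Φ(t,t₀)x₀ + ∫_{t₀}^{t} Φ(t,u)s(u) du is differentiable on I, satisfies φ(t₀) = x₀, and solves the inhomogeneous equation φ'(t) = B(t)φ(t) + s(t) for all t ∈ I. -/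
/-!
Uniqueness for the homogeneous linear equation gives the cocycle identity
`Φ(t,u) = Φ(t,t₀) Φ(t₀,u)`; in particular `Φ(t₀,u) = Φ(u,t₀)⁻¹` is continuous in `u`. Hence
`φ(t) = Φ(t,t₀) (x₀ + ∫_{t₀}^t Φ(t₀,u) s(u) du)`, and the product rule together with the
fundamental theorem of calculus gives `φ'(t) = B(t) φ(t) + Φ(t,t₀) Φ(t₀,t) s(t) = B(t) φ(t) + s(t)`.
-/

open Set Filter Matrix

section LinearODE

variable {E : Type*} [NormedAddCommGroup E] [NormedSpace ℝ E]

theorem linear_ODE_solution_unique {I : Set ℝ} (hI : I.OrdConnected) {A : ℝ → E →L[ℝ] E}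
    (hA : ContinuousOn A I) {f g : ℝ → E} {t₀ : ℝ} (ht₀ : t₀ ∈ I)
    (hf : ∀ t ∈ I, HasDerivAt f (A t (f t)) t) (hg : ∀ t ∈ I, HasDerivAt g (A t (g t)) t)
    (heq : f t₀ = g t₀) : EqOn f g I := by
  intro t ht
  have hJ : uIcc t₀ t ⊆ I := hI.uIcc_subset ht₀ ht
  obtain ⟨C, hC⟩ := isCompact_uIcc.exists_bound_of_continuousOn (hA.mono hJ)
  have hlip : ∀ u ∈ uIcc t₀ t, LipschitzOnWith C.toNNReal (A u) univ := fun u hu => by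
    refine ((A u).lipschitz.weaken ?_).lipschitzOnWith
    rw [← norm_toNNReal]
    exact Real.toNNReal_le_toNNReal (hC u hu)
  have hfc : ContinuousOn f (uIcc t₀ t) := HasDerivAt.continuousOn fun u hu => hf u (hJ hu)
  have hgc : ContinuousOn g (uIcc t₀ t) := HasDerivAt.continuousOn fun u hu => hg u (hJ hu)
  rcases le_total t₀ t with h | h
  · rw [uIcc_of_le h] at hJ hlip hfc hgc
    refine ODE_solution_unique_of_mem_Icc_right (fun u hu => hlip u (Ico_subset_Icc_self hu))
      hfc (fun u hu => (hf u (hJ (Ico_subset_Icc_self hu))).hasDerivWithinAt)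
      (fun _ _ => mem_univ _) hgc
      (fun u hu => (hg u (hJ (Ico_subset_Icc_self hu))).hasDerivWithinAt)
      (fun _ _ => mem_univ _) heq ⟨h, le_rfl⟩
  · rw [uIcc_of_ge h] at hJ hlip hfc hgc
    refine ODE_solution_unique_of_mem_Icc_left (fun u hu => hlip u (Ioc_subset_Icc_self hu))
      hfc (fun u hu => (hf u (hJ (Ioc_subset_Icc_self hu))).hasDerivWithinAt)
      (fun _ _ => mem_univ _) hgc
      (fun u hu => (hg u (hJ (Ioc_subset_Icc_self hu))).hasDerivWithinAt)
      (fun _ _ => mem_univ _) heq ⟨le_rfl, h⟩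

end LinearODE

namespace Matrix

theorem hasDerivAt_mulVec {𝕜 m n : Type*} [NontriviallyNormedField 𝕜] [Fintype n]
    {A : 𝕜 → Matrix m n 𝕜} {A' : Matrix m n 𝕜} {v : 𝕜 → n → 𝕜} {v' : n → 𝕜} {t : 𝕜}
    (hA : ∀ i j, HasDerivAt (fun t => A t i j) (A' i j) t) (hv : HasDerivAt v v' t) :
    HasDerivAt (fun t => A t *ᵥ v t) (A' *ᵥ v t + A t *ᵥ v') t := by
  refine hasDerivAt_pi.2 fun i => ?_
  simp only [Pi.add_apply, mulVec, dotProduct, ← Finset.sum_add_distrib]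
  exact HasDerivAt.fun_sum fun j _ => (hA i j).mul (hasDerivAt_pi.1 hv j)

variable {m n : Type*} [Fintype n] [DecidableEq n]

noncomputable def mulVecCLM : Matrix m n ℝ →ₗ[ℝ] (n → ℝ) →L[ℝ] (m → ℝ) :=
  LinearMap.toContinuousLinearMap.toLinearMap ∘ₗ toLin'.toLinearMap

@[simp]
theorem mulVecCLM_apply (M : Matrix m n ℝ) (v : n → ℝ) : mulVecCLM M v = M *ᵥ v := rfl

theorem continuous_mulVecCLM [Finite m] : Continuous (mulVecCLM : Matrix m n ℝ → _) :=
  LinearMap.continuous_of_finiteDimensional _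

theorem mulVec_intervalIntegral [Fintype m] (M : Matrix m n ℝ) {v : ℝ → n → ℝ} {a b : ℝ}
    (hv : IntervalIntegrable v MeasureTheory.volume a b) :
    M *ᵥ ∫ x in a..b, v x = ∫ x in a..b, M *ᵥ v x :=
  ((mulVecCLM M).intervalIntegral_comp_comm hv).symm

end Matrix

theorem hasDerivAt_intervalIntegral_of_continuousOn {E : Type*} [NormedAddCommGroup E]
    [NormedSpace ℝ E] [CompleteSpace E] {U : Set ℝ} (hUo : IsOpen U) (hU : U.OrdConnected)
    {f : ℝ → E} (hf : ContinuousOn f U) {a t : ℝ} (ha : a ∈ U) (ht : t ∈ U) :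
    HasDerivAt (fun t => ∫ u in a..t, f u) (f t) t :=
  intervalIntegral.integral_hasDerivAt_right (hf.mono (hU.uIcc_subset ha ht)).intervalIntegrable
    (hf.stronglyMeasurableAtFilter hUo t ht) (hf.continuousAt (hUo.mem_nhds ht))

structure IsTransitionOperator {n : Type*} [Fintype n] [DecidableEq n] (I : Set ℝ)
    (B : ℝ → Matrix n n ℝ) (Φ : ℝ → ℝ → Matrix n n ℝ) : Prop where
  hasDerivAt : ∀ u ∈ I, ∀ t ∈ I, ∀ i j, HasDerivAt (fun t' => Φ t' u i j) ((B t * Φ t u) i j) t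
  apply_self : ∀ u ∈ I, Φ u u = 1

namespace IsTransitionOperator

variable {n : Type*} [Fintype n] [DecidableEq n] {I : Set ℝ} {B : ℝ → Matrix n n ℝ}
  {Φ : ℝ → ℝ → Matrix n n ℝ} {t u w : ℝ}

theorem hasDerivAt_mulVec (hΦ : IsTransitionOperator I B Φ) (hu : u ∈ I) (ht : t ∈ I)
    (v : n → ℝ) : HasDerivAt (fun t' => Φ t' u *ᵥ v) (B t *ᵥ (Φ t u *ᵥ v)) t := by
  simpa [mulVec_mulVec] using
    Matrix.hasDerivAt_mulVec (hΦ.hasDerivAt u hu t ht) (hasDerivAt_const t v)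

theorem cocycle (hΦ : IsTransitionOperator I B Φ) (hI : I.OrdConnected) (hB : ContinuousOn B I)
    (ht : t ∈ I) (hw : w ∈ I) (hu : u ∈ I) : Φ t w * Φ w u = Φ t u := by
  refine ext_iff_mulVec.2 fun v => ?_
  rw [← mulVec_mulVec]
  refine linear_ODE_solution_unique hI (continuous_mulVecCLM.comp_continuousOn hB) hw
    (fun t ht => hΦ.hasDerivAt_mulVec hw ht _) (fun t ht => hΦ.hasDerivAt_mulVec hu ht v) ?_ ht
  simp [hΦ.apply_self w hw]

theorem mul_eq_one (hΦ : IsTransitionOperator I B Φ) (hI : I.OrdConnected)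
    (hB : ContinuousOn B I) (ht : t ∈ I) (hu : u ∈ I) : Φ t u * Φ u t = 1 := by
  rw [hΦ.cocycle hI hB ht hu ht, hΦ.apply_self t ht]

theorem continuousOn_left (hΦ : IsTransitionOperator I B Φ) (hu : u ∈ I) :
    ContinuousOn (fun t => Φ t u) I := fun t ht =>
  continuousAt_pi.2 (fun i => continuousAt_pi.2 fun j =>
    (hΦ.hasDerivAt u hu t ht i j).continuousAt) |>.continuousWithinAt

theorem continuousOn_right (hΦ : IsTransitionOperator I B Φ) (hI : I.OrdConnected)
    (hB : ContinuousOn B I) (ht : t ∈ I) : ContinuousOn (Φ t) I := by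
  have hinv : EqOn (fun u => (Φ u t)⁻¹) (Φ t) I := fun u hu =>
    inv_eq_left_inv (hΦ.mul_eq_one hI hB ht hu)
  refine ContinuousOn.congr (fun u hu => ?_) hinv.symm
  have hdet : (Φ u t).det ≠ 0 := (isUnit_det_of_left_inverse (hΦ.mul_eq_one hI hB ht hu)).ne_zero
  refine (continuousAt_matrix_inv _ ?_).comp_continuousWithinAt (hΦ.continuousOn_left ht u hu)
  simpa [Ring.inverse_eq_inv'] using continuousAt_inv₀ hdet

end IsTransitionOperator

/-- variation of constants.
Let `I ⊆ ℝ` be an open interval, `B`, `s` continuous on `I`, `t₀ ∈ I`, `x₀ ∈ ℝ^d`, and let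
`Φ` be the transition operator of `ẋ = B(t)x`, i.e. `∂_t Φ(t,u) = B(t)Φ(t,u)` (entrywise)
and `Φ(u,u) = Id` for `u ∈ I`.  Then `φ(t) = Φ(t,t₀)x₀ + ∫_{t₀}^t Φ(t,u)s(u) du` satisfies
`φ(t₀) = x₀` and is differentiable with `φ'(t) = B(t)φ(t) + s(t)` on `I`. -/
theorem stmt_3 (d : ℕ) (I : Set ℝ) (hIopen : IsOpen I) (hIconn : I.OrdConnected)
    (B : ℝ → Matrix (Fin d) (Fin d) ℝ) (s : ℝ → (Fin d → ℝ))
    (hBcont : ContinuousOn B I) (hscont : ContinuousOn s I)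
    (t₀ : ℝ) (ht₀ : t₀ ∈ I) (x₀ : Fin d → ℝ)
    (Φ : ℝ → ℝ → Matrix (Fin d) (Fin d) ℝ)
    (hΦderiv : ∀ u ∈ I, ∀ t ∈ I, ∀ i j : Fin d,
      HasDerivAt (fun t' => Φ t' u i j) ((B t * Φ t u) i j) t)
    (hΦid : ∀ u ∈ I, Φ u u = 1)
    (φ : ℝ → (Fin d → ℝ))
    (hφdef : ∀ t : ℝ,
      φ t = (Φ t t₀).mulVec x₀ + ∫ u in t₀..t, (Φ t u).mulVec (s u)) :
    φ t₀ = x₀ ∧ ∀ t ∈ I, HasDerivAt φ ((B t).mulVec (φ t) + s t) t := by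
  have hΦ : IsTransitionOperator I B Φ := ⟨hΦderiv, hΦid⟩
  have hsrc : ContinuousOn (fun u => Φ t₀ u *ᵥ s u) I :=
    (continuous_fst.matrix_mulVec continuous_snd).comp_continuousOn
      ((hΦ.continuousOn_right hIconn hBcont ht₀).prodMk hscont)
  have hφg : ∀ t ∈ I, φ t = Φ t t₀ *ᵥ (x₀ + ∫ u in t₀..t, Φ t₀ u *ᵥ s u) := fun t ht => by
    rw [hφdef, mulVec_add, mulVec_intervalIntegral _
      ((hsrc.mono (hIconn.uIcc_subset ht₀ ht)).intervalIntegrable)]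
    refine congrArg _ (intervalIntegral.integral_congr fun u hu => ?_)
    rw [mulVec_mulVec, hΦ.cocycle hIconn hBcont ht ht₀ (hIconn.uIcc_subset ht₀ ht hu)]
  refine ⟨by simp [hφdef, hΦid t₀ ht₀], fun t ht => ?_⟩
  have hg : HasDerivAt (fun t => x₀ + ∫ u in t₀..t, Φ t₀ u *ᵥ s u) (Φ t₀ t *ᵥ s t) t :=
    (hasDerivAt_intervalIntegral_of_continuousOn hIopen hIconn hsrc ht₀ ht).const_add x₀
  have hprod := Matrix.hasDerivAt_mulVec (hΦderiv t₀ ht₀ t ht) hg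
  rw [mulVec_mulVec, hΦ.mul_eq_one hIconn hBcont ht ht₀, one_mulVec, ← mulVec_mulVec,
    ← hφg t ht] at hprod
  exact hprod.congr_of_eventuallyEq (eventually_of_mem (hIopen.mem_nhds ht) hφg)
end

section
/- Let B : ℝ → ℝ^{d×d} and s : ℝ → ℝ^d be bounded continuous functions, and suppose there exist K ≥ 1 and γ > 0 such that every solution x of ẋ = B(t)x satisfies ‖x(t)‖ ≤ K e^{-γ(t-t₀)} ‖x(t₀)‖ for all t ≥ t₀. Then the inhomogeneous system ẋ = B(t)x + s(t) has exactly one bounded solution ν : ℝ → ℝ^d, i.e., there exists a differentiable bounded ν with ν'(t) = B(t)ν(t) + s(t) for all t ∈ ℝ, and any other bounded solution coincides with ν. -/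
/-!
Let `Φ` be the fundamental solution of `ẋ = A(t) x` with `Φ 0 = 1`, and `Ψ` the solution of
`Ψ' = -Ψ A` with `Ψ 0 = 1`; then `Φ Ψ = 1`, since both sides solve `M' = A M - M A`.
Exponential stability says `‖Φ t (Ψ τ v)‖ ≤ K e^{-γ (t - τ)} ‖v‖` for `τ ≤ t`, so the variation of
constants integral `ν t = Φ t (∫_{-∞}^t Ψ τ (s τ) dτ)` converges, is bounded by `|K| sup ‖s‖ / γ`
and solves `ẋ = A(t) x + s(t)`. The difference of two bounded solutions solves the homogeneous
equation, and letting `t₀ → -∞` in the stability estimate shows that it vanishes.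

Global solutions of these linear equations exist because, for a field that is Lipschitz uniformly
in time, the Picard–Lindelöf existence time is uniform, so local solutions glue along all of `ℝ`.
-/

open Set Filter Topology MeasureTheory
open scoped NNReal

section GlobalSolutions

variable {E : Type*} [NormedAddCommGroup E] [NormedSpace ℝ E] {f : ℝ → E → E} {K S : ℝ≥0}

theorem exists_pos_forall_exists_forall_mem_Ioo_hasDerivAt [CompleteSpace E]
    (hlip : ∀ t, LipschitzWith K (f t)) (hcont : ∀ x, Continuous (f · x))
    (hf0 : ∀ t, ‖f t 0‖ ≤ S) :
    ∃ ε > (0 : ℝ), ∀ (t₀ : ℝ) (x₀ : E), ∃ x : ℝ → E, x t₀ = x₀ ∧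
      ∀ t ∈ Ioo (t₀ - ε) (t₀ + ε), HasDerivAt x (f t (x t)) t := by
  set ε : ℝ := (((1 + 2 * K)⁻¹ : ℝ≥0) : ℝ)
  refine ⟨ε, by positivity, fun t₀ x₀ => ?_⟩
  set a : ℝ≥0 := ‖x₀‖₊ + S
  have hε : 0 ≤ ε := by positivity
  have ht₀ : t₀ ∈ Icc (t₀ - ε) (t₀ + ε) := ⟨by linarith, by linarith⟩
  -- on `closedBall x₀ a` the field is bounded by `S + K (‖x₀‖ + a) ≤ (1 + 2K) a`
  have hpl : IsPicardLindelof f ⟨t₀, ht₀⟩ x₀ a 0 ((1 + 2 * K) * a) K := by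
    refine ⟨fun t _ => (hlip t).lipschitzOnWith, fun x _ => (hcont x).continuousOn,
      fun t _ x hx => ?_, ?_⟩
    · have hx' : ‖x‖ ≤ 2 * ‖x₀‖ + S := by
        have := norm_le_norm_add_norm_sub' x x₀
        rw [Metric.mem_closedBall, dist_eq_norm] at hx
        push_cast [a] at hx
        linarith
      calc ‖f t x‖ ≤ ‖f t x - f t 0‖ + ‖f t 0‖ := norm_le_norm_sub_add _ _
        _ ≤ K * ‖x‖ + S := by
          gcongr
          · simpa [dist_eq_norm] using (hlip t).dist_le_mul x 0
          · exact hf0 t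
        _ ≤ K * (2 * ‖x₀‖ + S) + S := by gcongr
        _ ≤ ((1 + 2 * K) * a : ℝ≥0) := by
          push_cast [a]; nlinarith [norm_nonneg x₀, S.2, K.2]
    · have hK : (1 + 2 * K : ℝ) ≠ 0 := by positivity
      simp only [ε, a]
      simp [mul_right_comm _ _ (1 + 2 * (K : ℝ))⁻¹, hK]
  obtain ⟨x, hx₀, hx⟩ := hpl.exists_eq_forall_mem_Icc_hasDerivWithinAt₀
  exact ⟨x, hx₀, fun t ht =>
    (hx t (Ioo_subset_Icc_self ht)).hasDerivAt (Icc_mem_nhds ht.1 ht.2)⟩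

theorem exists_eqOn_eqOn_forall_mem_union_hasDerivAt (hlip : ∀ t, LipschitzWith K (f t))
    {x y : ℝ → E} {a b c d t₁ : ℝ}
    (hx : ∀ t ∈ Ioo a b, HasDerivAt x (f t (x t)) t)
    (hy : ∀ t ∈ Ioo c d, HasDerivAt y (f t (y t)) t)
    (ht₁ : t₁ ∈ Ioo a b ∩ Ioo c d) (hxy : x t₁ = y t₁) :
    ∃ w : ℝ → E, EqOn w x (Ioo a b) ∧ EqOn w y (Ioo c d) ∧
      ∀ t ∈ Ioo a b ∪ Ioo c d, HasDerivAt w (f t (w t)) t := by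
  classical
  rw [Ioo_inter_Ioo] at ht₁
  have hxy' : EqOn x y (Ioo (max a c) (min b d)) :=
    ODE_solution_unique_of_mem_Ioo (s := fun _ => univ) (fun t _ => (hlip t).lipschitzOnWith)
      ht₁ (fun t ht => ⟨hx t ⟨(le_max_left _ _).trans_lt ht.1, ht.2.trans_le (min_le_left _ _)⟩,
        trivial⟩)
      (fun t ht => ⟨hy t ⟨(le_max_right _ _).trans_lt ht.1, ht.2.trans_le (min_le_right _ _)⟩,
        trivial⟩) hxy
  have hwy : EqOn ((Ioo a b).piecewise x y) y (Ioo c d) := fun t ht => by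
    by_cases h : t ∈ Ioo a b
    · rw [piecewise_eq_of_mem _ _ _ h]
      exact hxy' ⟨max_lt h.1 ht.1, lt_min h.2 ht.2⟩
    · exact piecewise_eq_of_notMem _ _ _ h
  refine ⟨(Ioo a b).piecewise x y, piecewise_eqOn _ _ _, hwy, ?_⟩
  rintro t (ht | ht)
  · rw [piecewise_eq_of_mem _ _ _ ht]
    exact (hx t ht).congr_of_eventuallyEq
      ((piecewise_eqOn _ _ _).eventuallyEq_of_mem (Ioo_mem_nhds ht.1 ht.2))
  · rw [hwy ht]
    exact (hy t ht).congr_of_eventuallyEq (hwy.eventuallyEq_of_mem (Ioo_mem_nhds ht.1 ht.2))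

theorem exists_forall_mem_Ioo_hasDerivAt_of_lipschitzWith [CompleteSpace E]
    (hlip : ∀ t, LipschitzWith K (f t)) (hcont : ∀ x, Continuous (f · x))
    (hf0 : ∀ t, ‖f t 0‖ ≤ S) (t₀ : ℝ) (x₀ : E) (T : ℝ) :
    ∃ x : ℝ → E, x t₀ = x₀ ∧ ∀ t ∈ Ioo (t₀ - T) (t₀ + T), HasDerivAt x (f t (x t)) t := by
  obtain ⟨ε, hε, hloc⟩ := exists_pos_forall_exists_forall_mem_Ioo_hasDerivAt hlip hcont hf0
  set δ := ε / 2 with hδ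
  -- each step glues local solutions of radius `ε = 2δ` centred at `t₀ ± nδ`
  have key : ∀ n : ℕ, ∃ x : ℝ → E, x t₀ = x₀ ∧
      ∀ t ∈ Ioo (t₀ - (n + 1) * δ) (t₀ + (n + 1) * δ), HasDerivAt x (f t (x t)) t := by
    intro n
    induction n with
    | zero =>
      obtain ⟨x, hx₀, hx⟩ := hloc t₀ x₀
      refine ⟨x, hx₀, fun t ht => hx t ?_⟩
      push_cast at ht
      exact ⟨by linarith [ht.1], by linarith [ht.2]⟩
    | succ n ih =>
      obtain ⟨x, hx₀, hx⟩ := ih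
      have hnδ : 0 ≤ n * δ := by positivity
      obtain ⟨y, hy₀, hy⟩ := hloc (t₀ + n * δ) (x (t₀ + n * δ))
      obtain ⟨w, hwx, -, hw⟩ := exists_eqOn_eqOn_forall_mem_union_hasDerivAt hlip hx hy
        ⟨⟨by linarith, by linarith⟩, ⟨by linarith, by linarith⟩⟩ hy₀.symm
      obtain ⟨z, hz₀, hz⟩ := hloc (t₀ - n * δ) (w (t₀ - n * δ))
      obtain ⟨v, -, hvw, hv⟩ := exists_eqOn_eqOn_forall_mem_union_hasDerivAt hlip hz
        (fun t ht => hw t (Ioo_subset_Ioo_union_Ioo le_rfl (by linarith) (by linarith) ht))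
        (c := t₀ - (n + 1) * δ) (d := t₀ + (n + 2) * δ)
        ⟨⟨by linarith, by linarith⟩, ⟨by linarith, by linarith⟩⟩ hz₀
      refine ⟨v, ?_, fun t ht => hv t ?_⟩
      · rw [hvw ⟨by linarith, by linarith⟩, hwx ⟨by linarith, by linarith⟩, hx₀]
      · push_cast at ht ⊢
        exact Ioo_subset_Ioo_union_Ioo (by linarith) (by linarith) (by linarith) ht
  obtain ⟨n, hn⟩ := exists_nat_ge (T / δ)
  obtain ⟨x, hx₀, hx⟩ := key n
  have hT : T ≤ (n + 1) * δ := by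
    rw [div_le_iff₀ (by positivity)] at hn
    nlinarith
  exact ⟨x, hx₀, fun t ht => hx t ⟨by linarith [ht.1], by linarith [ht.2]⟩⟩

theorem exists_forall_hasDerivAt_of_lipschitzWith [CompleteSpace E]
    (hlip : ∀ t, LipschitzWith K (f t)) (hcont : ∀ x, Continuous (f · x))
    (hf0 : ∀ t, ‖f t 0‖ ≤ S) (t₀ : ℝ) (x₀ : E) :
    ∃ x : ℝ → E, x t₀ = x₀ ∧ ∀ t, HasDerivAt x (f t (x t)) t := by
  choose X hX₀ hX using exists_forall_mem_Ioo_hasDerivAt_of_lipschitzWith hlip hcont hf0 t₀ x₀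
  have hagree : ∀ T T' t, |t - t₀| < T → |t - t₀| < T' → X T t = X T' t := by
    intro T T' t hT hT'
    have hsub : ∀ T'' ≥ min T T', Ioo (t₀ - min T T') (t₀ + min T T') ⊆ Ioo (t₀ - T'') (t₀ + T'') :=
      fun T'' h => Ioo_subset_Ioo (by linarith) (by linarith)
    have hm := lt_min hT hT'
    have h0 := (abs_nonneg (t - t₀)).trans_lt hm
    rw [abs_sub_lt_iff] at hm
    exact ODE_solution_unique_of_mem_Ioo (s := fun _ => univ)
      (fun t _ => (hlip t).lipschitzOnWith) (t₀ := t₀) ⟨by linarith, by linarith⟩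
      (fun u hu => ⟨hX T u (hsub T (min_le_left _ _) hu), trivial⟩)
      (fun u hu => ⟨hX T' u (hsub T' (min_le_right _ _) hu), trivial⟩)
      ((hX₀ T).trans (hX₀ T').symm) ⟨by linarith, by linarith⟩
  refine ⟨fun t => X (|t - t₀| + 1) t, hX₀ _, fun t => ?_⟩
  set T := |t - t₀| + 1
  have hU : {u | |u - t₀| < T} ∈ 𝓝 t :=
    (isOpen_lt (by fun_prop) continuous_const).mem_nhds (by simp [T])
  have heq : (fun u => X (|u - t₀| + 1) u) =ᶠ[𝓝 t] X T :=
    eventually_of_mem hU fun u hu => hagree _ _ _ (by linarith) hu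
  have hT : |t - t₀| < T := by simp [T]
  rw [abs_sub_lt_iff] at hT
  have h := (hX T t ⟨by linarith, by linarith⟩).congr_of_eventuallyEq heq
  rwa [← heq.eq_of_nhds] at h

end GlobalSolutions

section BanachAlgebra

variable {R : Type*} [NormedRing R] {P Q : ℝ → R} {C : ℝ≥0}

theorem lipschitzWith_mul_add_mul (p q : R) :
    LipschitzWith (‖p‖₊ + ‖q‖₊) fun M => p * M + M * q := by
  refine LipschitzWith.of_dist_le_mul fun M N => ?_
  rw [dist_eq_norm, dist_eq_norm]
  calc ‖p * M + M * q - (p * N + N * q)‖ = ‖p * (M - N) + (M - N) * q‖ := by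
        congr 1; noncomm_ring
    _ ≤ ‖p‖ * ‖M - N‖ + ‖M - N‖ * ‖q‖ := norm_add_le_of_le (norm_mul_le _ _) (norm_mul_le _ _)
    _ = ↑(‖p‖₊ + ‖q‖₊) * ‖M - N‖ := by push_cast; ring

theorem exists_forall_hasDerivAt_mul_add_mul [NormedAlgebra ℝ R] [CompleteSpace R]
    (hP : Continuous P) (hQ : Continuous Q) (hPQ : ∀ t, ‖P t‖₊ + ‖Q t‖₊ ≤ C)
    (t₀ : ℝ) (M₀ : R) :
    ∃ M : ℝ → R, M t₀ = M₀ ∧ ∀ t, HasDerivAt M (P t * M t + M t * Q t) t :=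
  exists_forall_hasDerivAt_of_lipschitzWith (S := 0)
    (fun t => (lipschitzWith_mul_add_mul _ _).weaken (hPQ t)) (fun _ => by fun_prop)
    (fun t => by simp) t₀ M₀

theorem eq_of_hasDerivAt_mul_add_mul [NormedAlgebra ℝ R] (hPQ : ∀ t, ‖P t‖₊ + ‖Q t‖₊ ≤ C)
    {M N : ℝ → R} (hM : ∀ t, HasDerivAt M (P t * M t + M t * Q t) t)
    (hN : ∀ t, HasDerivAt N (P t * N t + N t * Q t) t) {t₀ : ℝ} (h : M t₀ = N t₀) : M = N :=
  ODE_solution_unique_univ (s := fun _ => univ)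
    (fun t => ((lipschitzWith_mul_add_mul _ _).weaken (hPQ t)).lipschitzOnWith)
    (fun t => ⟨hM t, trivial⟩) (fun t => ⟨hN t, trivial⟩) h

end BanachAlgebra

section LinearEquation

variable {E : Type*} [NormedAddCommGroup E] [NormedSpace ℝ E] [CompleteSpace E]
  {A : ℝ → E →L[ℝ] E} {C : ℝ≥0}

theorem exists_fundamental_solution (hA : Continuous A) (hAb : ∀ t, ‖A t‖₊ ≤ C) :
    ∃ Φ Ψ : ℝ → E →L[ℝ] E, (∀ t, HasDerivAt Φ (A t * Φ t) t) ∧ Φ 0 = 1 ∧ Continuous Ψ ∧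
      ∀ t, Φ t * Ψ t = 1 := by
  obtain ⟨Φ, hΦ₀, hΦ⟩ := exists_forall_hasDerivAt_mul_add_mul (Q := 0) hA continuous_const
    (by simpa using hAb) 0 1
  obtain ⟨Ψ, hΨ₀, hΨ⟩ := exists_forall_hasDerivAt_mul_add_mul (P := 0) continuous_const hA.neg
    (by simpa using hAb) 0 1
  have hΦΨ : (fun t => Φ t * Ψ t) = fun _ => 1 := by
    refine eq_of_hasDerivAt_mul_add_mul (P := A) (Q := -A) (C := 2 * C) (t₀ := 0)
      (fun t => by simpa [two_mul] using add_le_add (hAb t) (hAb t))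
      (fun t => ?_) (fun t => by simpa using hasDerivAt_const t (1 : E →L[ℝ] E))
      (by simp [hΦ₀, hΨ₀])
    convert (hΦ t).fun_mul (hΨ t) using 1
    simp only [Pi.zero_apply, Pi.neg_apply, mul_zero, zero_mul, add_zero, zero_add]
    noncomm_ring
  exact ⟨Φ, Ψ, by simpa using hΦ, hΦ₀, continuous_iff_continuousAt.2 fun t => (hΨ t).continuousAt,
    congrFun hΦΨ⟩

end LinearEquation

section ImproperIntegrals

theorem integrableOn_exp_neg_mul_sub_Iic {γ : ℝ} (hγ : 0 < γ) (t : ℝ) :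
    IntegrableOn (fun τ => Real.exp (-γ * (t - τ))) (Iic t) := by
  have h : (fun τ => Real.exp (-γ * (t - τ))) = fun τ => Real.exp (-γ * t) * Real.exp (γ * τ) := by
    ext τ; rw [← Real.exp_add]; ring_nf
  rw [h]
  exact (integrableOn_exp_mul_Iic hγ t).const_mul _

theorem integral_exp_neg_mul_sub_Iic {γ : ℝ} (hγ : 0 < γ) (t : ℝ) :
    ∫ τ in Iic t, Real.exp (-γ * (t - τ)) = γ⁻¹ := by
  have h : (fun τ => Real.exp (-γ * (t - τ))) = fun τ => Real.exp (-γ * t) * Real.exp (γ * τ) := by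
    ext τ; rw [← Real.exp_add]; ring_nf
  rw [h, integral_const_mul, integral_exp_mul_Iic hγ, mul_div_assoc', ← Real.exp_add]
  simp

variable {E : Type*} [NormedAddCommGroup E] [NormedSpace ℝ E] [CompleteSpace E]

theorem hasDerivAt_integral_Iic {g : ℝ → E} (hg : Continuous g)
    (hint : ∀ t, IntegrableOn g (Iic t)) (t : ℝ) :
    HasDerivAt (fun u => ∫ τ in Iic u, g τ) (g t) t := by
  have h : (fun u => ∫ τ in Iic u, g τ) = fun u => (∫ τ in Iic t, g τ) + ∫ τ in t..u, g τ := by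
    ext u
    rw [← intervalIntegral.integral_Iic_sub_Iic (hint t) (hint u)]
    abel
  rw [h]
  exact ((hg.integral_hasStrictDerivAt t t).hasDerivAt).const_add _

end ImproperIntegrals

section BoundedSolutions

variable {E : Type*} [NormedAddCommGroup E] {K γ : ℝ}

theorem eq_zero_of_isBounded_range_of_norm_le_exp {x : ℝ → E} (hγ : 0 < γ)
    (hx : ∀ t₀ t, t₀ ≤ t → ‖x t‖ ≤ K * Real.exp (-γ * (t - t₀)) * ‖x t₀‖)
    (hb : Bornology.IsBounded (range x)) : x = 0 := by
  obtain ⟨M, hM⟩ := isBounded_iff_forall_norm_le.1 hb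
  funext t
  have hexp : Tendsto (fun t₀ => K * Real.exp (-γ * (t - t₀))) atBot (𝓝 0) := by
    have h : Tendsto (fun t₀ => -γ * (t - t₀)) atBot atBot :=
      (tendsto_atBot_add_const_right _ (-γ * t) (tendsto_id.const_mul_atBot hγ)).congr
        fun t₀ => by simp only [id]; ring
    simpa using (Real.tendsto_exp_atBot.comp h).const_mul K
  have hlim : Tendsto (fun t₀ => K * Real.exp (-γ * (t - t₀)) * ‖x t₀‖) atBot (𝓝 0) :=
    hexp.zero_mul_isBoundedUnder_le
      ⟨M, eventually_map.2 (Eventually.of_forall fun t₀ => by simpa using hM _ (mem_range_self t₀))⟩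
  exact norm_le_zero_iff.1
    (ge_of_tendsto hlim ((eventually_le_atBot t).mono fun t₀ h => hx t₀ t h))

variable [NormedSpace ℝ E] [CompleteSpace E] {A : ℝ → E →L[ℝ] E} {s : ℝ → E} {C : ℝ≥0} {S : ℝ}

theorem exists_isBounded_solution (hA : Continuous A) (hAb : ∀ t, ‖A t‖₊ ≤ C)
    (hs : Continuous s) (hsb : ∀ t, ‖s t‖ ≤ S) (hγ : 0 < γ)
    (hstab : ∀ x : ℝ → E, (∀ t, HasDerivAt x (A t (x t)) t) →
      ∀ t₀ t, t₀ ≤ t → ‖x t‖ ≤ K * Real.exp (-γ * (t - t₀)) * ‖x t₀‖) :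
    ∃ ν : ℝ → E, (∀ t, HasDerivAt ν (A t (ν t) + s t) t) ∧ Bornology.IsBounded (range ν) := by
  obtain ⟨Φ, Ψ, hΦ, hΦ₀, hΨ, hΦΨ⟩ := exists_fundamental_solution hA hAb
  -- `Φ t * Ψ τ` is the evolution operator from time `τ` to time `t`
  have hdecay : ∀ τ t, τ ≤ t → ∀ v, ‖Φ t (Ψ τ v)‖ ≤ |K| * Real.exp (-γ * (t - τ)) * ‖v‖ := by
    intro τ t hτt v
    have hsol : ∀ r, HasDerivAt (fun r => Φ r (Ψ τ v)) (A r (Φ r (Ψ τ v))) r := fun r => by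
      simpa using (hΦ r).clm_apply (hasDerivAt_const r (Ψ τ v))
    calc ‖Φ t (Ψ τ v)‖ ≤ K * Real.exp (-γ * (t - τ)) * ‖Φ τ (Ψ τ v)‖ := hstab _ hsol τ t hτt
      _ = K * Real.exp (-γ * (t - τ)) * ‖v‖ := by
        rw [← mul_apply_eq_comp, hΦΨ, one_apply_eq_self]
      _ ≤ |K| * Real.exp (-γ * (t - τ)) * ‖v‖ := by gcongr; exact le_abs_self K
  set g : ℝ → E := fun τ => Ψ τ (s τ)
  have hg : Continuous g := hΨ.clm_apply hs
  have hbound : ∀ τ t, τ ≤ t → ‖Φ t (g τ)‖ ≤ |K| * Real.exp (-γ * (t - τ)) * S :=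
    fun τ t h => (hdecay τ t h (s τ)).trans (by gcongr; exact hsb τ)
  have hbound_int : ∀ t, IntegrableOn (fun τ => |K| * Real.exp (-γ * (t - τ)) * S) (Iic t) :=
    fun t => ((integrableOn_exp_neg_mul_sub_Iic hγ t).const_mul _).mul_const _
  have hgint : ∀ t, IntegrableOn g (Iic t) := by
    intro t
    refine integrableOn_Iic_iff_integrableAtFilter_atBot.2
      ⟨⟨Iic 0, Iic_mem_atBot 0, ?_⟩, hg.locallyIntegrable.locallyIntegrableOn _⟩
    refine (hbound_int 0).mono' hg.aestronglyMeasurable.restrict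
      (ae_restrict_of_forall_mem measurableSet_Iic fun τ hτ => ?_)
    simpa [hΦ₀] using hbound τ 0 hτ
  set ν : ℝ → E := fun t => Φ t (∫ τ in Iic t, g τ)
  refine ⟨ν, fun t => ?_,
    isBounded_iff_forall_norm_le.2 ⟨|K| * γ⁻¹ * S, forall_mem_range.2 fun t => ?_⟩⟩
  · convert (hΦ t).clm_apply (hasDerivAt_integral_Iic hg hgint t) using 1
    rw [mul_apply_eq_comp, ← mul_apply_eq_comp (Φ t), hΦΨ, one_apply_eq_self]
  · calc ‖ν t‖ = ‖∫ τ in Iic t, Φ t (g τ)‖ := by rw [(Φ t).integral_comp_comm (hgint t)]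
      _ ≤ ∫ τ in Iic t, |K| * Real.exp (-γ * (t - τ)) * S :=
        norm_integral_le_of_norm_le (hbound_int t)
          (ae_restrict_of_forall_mem measurableSet_Iic fun τ hτ => hbound τ t hτ)
      _ = |K| * γ⁻¹ * S := by
        rw [integral_mul_const, integral_const_mul, integral_exp_neg_mul_sub_Iic hγ]

theorem existsUnique_isBounded_solution (hA : Continuous A) (hAb : ∀ t, ‖A t‖₊ ≤ C)
    (hs : Continuous s) (hsb : ∀ t, ‖s t‖ ≤ S) (hγ : 0 < γ)
    (hstab : ∀ x : ℝ → E, (∀ t, HasDerivAt x (A t (x t)) t) →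
      ∀ t₀ t, t₀ ≤ t → ‖x t‖ ≤ K * Real.exp (-γ * (t - t₀)) * ‖x t₀‖) :
    ∃! ν : ℝ → E, (∀ t, HasDerivAt ν (A t (ν t) + s t) t) ∧ Bornology.IsBounded (range ν) := by
  obtain ⟨ν, hν, hνb⟩ := exists_isBounded_solution hA hAb hs hsb hγ hstab
  refine ⟨ν, ⟨hν, hνb⟩, fun μ ⟨hμ, hμb⟩ => ?_⟩
  have hdiff : ∀ t, HasDerivAt (μ - ν) (A t ((μ - ν) t)) t := fun t => by
    simpa using (hμ t).sub (hν t)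
  refine sub_eq_zero.1 (eq_zero_of_isBounded_range_of_norm_le_exp hγ (hstab _ hdiff) ?_)
  exact (hμb.sub hνb).subset
    (range_subset_iff.2 fun t => sub_mem_sub (mem_range_self t) (mem_range_self t))

end BoundedSolutions

theorem Matrix.nnnorm_toContinuousLinearMap_mulVecLin_le {n : Type*} [Fintype n]
    (M : Matrix n n ℝ) {c : ℝ≥0} (hM : ∀ i j, |M i j| ≤ c) :
    ‖LinearMap.toContinuousLinearMap M.mulVecLin‖₊ ≤ Fintype.card n * c := by
  rw [← NNReal.coe_le_coe, coe_nnnorm]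
  push_cast
  refine ContinuousLinearMap.opNorm_le_bound _ (by positivity) fun v =>
    (pi_norm_le_iff_of_nonneg (by positivity)).2 fun i => ?_
  calc ‖∑ j, M i j * v j‖ ≤ ∑ j, ‖M i j * v j‖ := norm_sum_le _ _
    _ ≤ ∑ _j : n, c * ‖v‖ := by
      gcongr with j
      rw [norm_mul, Real.norm_eq_abs]
      exact mul_le_mul (hM i j) (norm_le_pi_norm v j) (norm_nonneg _) c.2
    _ = Fintype.card n * c * ‖v‖ := by simp [mul_assoc]

theorem stmt_4_general (d : ℕ)
    (B : ℝ → Matrix (Fin d) (Fin d) ℝ) (s : ℝ → (Fin d → ℝ))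
    (hBcont : Continuous B)
    (hBbdd : ∃ C : ℝ, ∀ t : ℝ, ∀ i j : Fin d, |B t i j| ≤ C)
    (hscont : Continuous s)
    (hsbdd : ∃ C : ℝ, ∀ t : ℝ, ‖s t‖ ≤ C)
    (K γ : ℝ) (hγ : 0 < γ)
    (hstab : ∀ x : ℝ → (Fin d → ℝ),
      (∀ t : ℝ, HasDerivAt x ((B t).mulVec (x t)) t) →
      ∀ t₀ t : ℝ, t₀ ≤ t → ‖x t‖ ≤ K * Real.exp (-γ * (t - t₀)) * ‖x t₀‖) :
    ∃! ν : ℝ → (Fin d → ℝ),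
      (∀ t : ℝ, HasDerivAt ν ((B t).mulVec (ν t) + s t) t) ∧
        Bornology.IsBounded (Set.range ν) := by
  obtain ⟨C, hC⟩ := hBbdd
  obtain ⟨S, hS⟩ := hsbdd
  have hA : Continuous fun t => LinearMap.toContinuousLinearMap (B t).mulVecLin :=
    continuous_clm_apply.2 fun v => hBcont.matrix_mulVec continuous_const
  have hAb (t : ℝ) : ‖LinearMap.toContinuousLinearMap (B t).mulVecLin‖₊ ≤ d * C.toNNReal := by
    simpa using (B t).nnnorm_toContinuousLinearMap_mulVecLin_le
      fun i j => (hC t i j).trans (Real.le_coe_toNNReal C)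
  exact existsUnique_isBounded_solution hA hAb hscont hS hγ hstab

/-- If `B`, `s` are bounded continuous on `ℝ` and `ẋ = B(t)x` is exponentially stable, then
`ẋ = B(t)x + s(t)` has exactly one bounded solution `ν : ℝ → ℝ^d`. -/
theorem stmt_4 (d : ℕ)
    (B : ℝ → Matrix (Fin d) (Fin d) ℝ) (s : ℝ → (Fin d → ℝ))
    (hBcont : Continuous B)
    (hBbdd : ∃ C : ℝ, ∀ t : ℝ, ∀ i j : Fin d, |B t i j| ≤ C)
    (hscont : Continuous s)
    (hsbdd : ∃ C : ℝ, ∀ t : ℝ, ‖s t‖ ≤ C)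
    (K γ : ℝ) (hK : 1 ≤ K) (hγ : 0 < γ)
    (hstab : ∀ x : ℝ → (Fin d → ℝ),
      (∀ t : ℝ, HasDerivAt x ((B t).mulVec (x t)) t) →
      ∀ t₀ t : ℝ, t₀ ≤ t → ‖x t‖ ≤ K * Real.exp (-γ * (t - t₀)) * ‖x t₀‖) :
    ∃! ν : ℝ → (Fin d → ℝ),
      (∀ t : ℝ, HasDerivAt ν ((B t).mulVec (ν t) + s t) t) ∧
        Bornology.IsBounded (Set.range ν) :=
  stmt_4_general d B s hBcont hBbdd hscont hsbdd K γ hγ hstab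
end

section
/- Let τ ∈ {-∞} ∪ ℝ, I = (τ,∞), let B : I → ℝ^{d×d} with entries b_{ij} and s : I → [0,∞)^d be bounded continuous, and let x : I → ℝ^d be a solution of ẋ = B(t)x + s(t) whose entries are positive, bounded, and bounded away from zero. Suppose {1,…,d} is partitioned into consecutive blocks J₁,…,J_m such that B(t)_{ij} = 0 whenever i ∈ J_p, j ∈ J_q with p < q, and there exists δ > 0 such that each diagonal block of B(t) has negative diagonal entries, nonnegative within-block off-diagonal entries, and within-block row sums ≤ −δ; furthermore s_i(t) ≥ δ for all i ∈ J₁ and t ∈ I, and for every n ≥ 2 and every i ∈ J_n there exists j ∈ J₁ ∪ ⋯ ∪ J_{n-1} with b_{ij}(t) ≥ δ for all t ∈ I. Define A(t) by A(t)_{ii} = (−s_i(t) − Σ_{j≠i} b_{ij}(t)x_j(t))/x_i(t) and A(t)_{ij} = b_{ij}(t)x_j(t)/x_i(t) for j ≠ i. Then the mean age system is exponentially stable: there exist K̄ ≥ 1 and δ̄ ∈ (0,δ) such that every differentiable a : I → ℝ^d with a'(t) = A(t)a(t) for all t ∈ I satisfies ‖a(t)‖ ≤ K̄ e^{-δ̄(t-t₀)}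 ‖a(t₀)‖ for all t ≥ t₀ > τ. -/
/-!
Weight pool `i` by `wᵢ = 2 ^ (block of i)`. Since `A(t) 1 = -s(t)/x(t)`, the weighted row sum
`xᵢ (A(t) w)ᵢ = -sᵢ wᵢ + ∑_{j ≠ i} bᵢⱼ xⱼ (wⱼ - wᵢ)` has only nonpositive terms, and one of them
is at most `-δ wᵢ` (input into the first block) or `-δ ε wᵢ / 2` with `ε ≤ x` (feed from an
earlier block, whose weight is at most half); so `A(t) w ≤ -δ̄ w`. Conjugated by `diag w`, `A(t)`
becomes a matrix with nonnegative off-diagonal entries and row sums `≤ -δ̄`, for which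
`‖u + h M u‖_∞ ≤ (1 - δ̄ h) ‖u‖_∞` when `h > 0` is small. This bounds the right Dini derivative of
the weighted sup norm of a solution by `-δ̄` times itself, and Gronwall's inequality gives the
decay, with `K̄ = 2 ^ m` absorbing the ratio of the weights.
-/

/-- The coefficient matrix `A(t)` of the mean age system along a positive solution `x`:
`A(t)ᵢᵢ = (−sᵢ(t) − ∑_{j≠i} bᵢⱼ(t)xⱼ(t))/xᵢ(t)` and `A(t)ᵢⱼ = bᵢⱼ(t)xⱼ(t)/xᵢ(t)` for `j ≠ i`. -/
noncomputable def meanAgeMatrix {d : ℕ} (B : ℝ → Matrix (Fin d) (Fin d) ℝ)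
    (s : ℝ → (Fin d → ℝ)) (x : ℝ → Fin d → ℝ) (t : ℝ) : Matrix (Fin d) (Fin d) ℝ :=
  Matrix.of fun i j =>
    if i = j then (-s t i - ∑ k ∈ Finset.univ.erase i, B t i k * x t k) / x t i
    else B t i j * x t j / x t i

open Filter Topology Set Matrix

section Metzler

variable {ι : Type*} [Fintype ι] [DecidableEq ι]

theorem norm_add_smul_mulVec_le {M : Matrix ι ι ℝ} {c h : ℝ}
    (hoff : ∀ i j, i ≠ j → 0 ≤ M i j) (hrow : ∀ i, ∑ j, M i j ≤ -c)
    (hh : 0 ≤ h) (hdiag : ∀ i, 0 ≤ 1 + h * M i i) (u : ι → ℝ) :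
    ‖u + h • M *ᵥ u‖ ≤ (1 - c * h) * ‖u‖ := by
  rcases isEmpty_or_nonempty ι with hι | hι
  · simp [Subsingleton.elim u 0]
  have hP : ∀ i j, 0 ≤ (1 + h • M) i j := by
    intro i j
    rcases eq_or_ne i j with rfl | hij
    · simpa using hdiag i
    · simpa [one_apply_ne hij] using mul_nonneg hh (hoff i j hij)
  rw [show u + h • M *ᵥ u = (1 + h • M) *ᵥ u by simp [add_mulVec, smul_mulVec]]
  refine (pi_norm_le_iff_of_nonempty _).2 fun i => ?_
  calc ‖((1 + h • M) *ᵥ u) i‖ ≤ ∑ j, (1 + h • M) i j * ‖u‖ := by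
        refine (norm_sum_le _ _).trans (Finset.sum_le_sum fun j _ => ?_)
        rw [norm_mul, Real.norm_of_nonneg (hP i j)]
        exact mul_le_mul_of_nonneg_left (norm_le_pi_norm u j) (hP i j)
    _ = (1 + h * ∑ j, M i j) * ‖u‖ := by
        simp [← Finset.sum_mul, Finset.sum_add_distrib, one_apply, Finset.mul_sum]
    _ ≤ (1 - c * h) * ‖u‖ := by gcongr; nlinarith [hrow i]

theorem eventually_slope_norm_lt {M : Matrix ι ι ℝ} {g : ℝ → ι → ℝ} {c z r : ℝ}
    (hoff : ∀ i j, i ≠ j → 0 ≤ M i j) (hrow : ∀ i, ∑ j, M i j ≤ -c)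
    (hg : HasDerivAt g (M *ᵥ g z) z) (hr : -c * ‖g z‖ < r) :
    ∀ᶠ y in 𝓝[>] z, (y - z)⁻¹ * (‖g y‖ - ‖g z‖) < r := by
  have hslope : Tendsto (fun y => ‖slope g z y - M *ᵥ g z‖) (𝓝[>] z) (𝓝 0) :=
    tendsto_iff_norm_sub_tendsto_zero.1
      ((hasDerivAt_iff_tendsto_slope.1 hg).mono_left (nhdsGT_le_nhdsNE z))
  have hdiag : ∀ᶠ y in 𝓝[>] z, ∀ i, 0 ≤ 1 + (y - z) * M i i := by
    refine eventually_all.2 fun i => ?_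
    have : Tendsto (fun y => 1 + (y - z) * M i i) (𝓝[>] z) (𝓝 1) := by
      simpa using (((continuous_sub_right z).mul continuous_const).const_add 1).tendsto z
        |>.mono_left nhdsWithin_le_nhds
    exact this.eventually (eventually_ge_nhds zero_lt_one)
  filter_upwards [hslope.eventually (gt_mem_nhds (by linarith : 0 < r + c * ‖g z‖)), hdiag,
    self_mem_nhdsWithin] with y hy hdiag hzy
  have hzy : 0 < y - z := sub_pos.2 hzy
  have hgy : ‖g y‖ ≤ (1 - c * (y - z)) * ‖g z‖ + (y - z) * ‖slope g z y - M *ᵥ g z‖ := by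
    calc ‖g y‖ = ‖(g z + (y - z) • M *ᵥ g z) + (y - z) • (slope g z y - M *ᵥ g z)‖ := by
          rw [smul_sub, add_add_sub_cancel, add_comm, ← vadd_eq_add, sub_smul_slope_vadd]
      _ ≤ _ := by
          refine (norm_add_le _ _).trans (add_le_add
            (norm_add_smul_mulVec_le hoff hrow hzy.le hdiag _) ?_)
          rw [norm_smul, Real.norm_of_nonneg hzy.le]
  rw [inv_mul_lt_iff₀ hzy]
  nlinarith

theorem norm_le_exp_mul_norm_of_hasDerivAt_mulVec {M : ℝ → Matrix ι ι ℝ} {g : ℝ → ι → ℝ}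
    {c t₀ t : ℝ} (hoff : ∀ z ∈ Ico t₀ t, ∀ i j, i ≠ j → 0 ≤ M z i j)
    (hrow : ∀ z ∈ Ico t₀ t, ∀ i, ∑ j, M z i j ≤ -c)
    (hg : ∀ z ∈ Icc t₀ t, HasDerivAt g (M z *ᵥ g z) z) (ht : t₀ ≤ t) :
    ‖g t‖ ≤ ‖g t₀‖ * Real.exp (-c * (t - t₀)) := by
  have := le_gronwallBound_of_liminf_deriv_right_le (f := fun z => ‖g z‖)
    (f' := fun z => -c * ‖g z‖) (K := -c) (ε := 0)
    (fun z hz => (hg z hz).continuousAt.norm.continuousWithinAt)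
    (fun z hz r hr => (eventually_slope_norm_lt (hoff z hz) (hrow z hz)
      (hg z (Ico_subset_Icc_self hz)) hr).frequently)
    le_rfl (fun z _ => by simp) t (right_mem_Icc.2 ht)
  rwa [gronwallBound_ε0] at this

theorem diagonal_inv_mul_mul_diagonal_mulVec_s9 {A : Matrix ι ι ℝ} {w : ι → ℝ} (hw : ∀ i, w i ≠ 0)
    (u : ι → ℝ) :
    (diagonal w⁻¹ * A * diagonal w) *ᵥ (diagonal w⁻¹ *ᵥ u) = diagonal w⁻¹ *ᵥ (A *ᵥ u) := by
  have hww : diagonal w * diagonal w⁻¹ = 1 := by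
    rw [diagonal_mul_diagonal, ← diagonal_one]
    exact congrArg diagonal (funext fun i => mul_inv_cancel₀ (hw i))
  rw [mulVec_mulVec, Matrix.mul_assoc, Matrix.mul_assoc, hww, Matrix.mul_one, ← mulVec_mulVec]

theorem norm_le_mul_exp_mul_norm_of_mulVec_weight_le {A : ℝ → Matrix ι ι ℝ} {a : ℝ → ι → ℝ}
    {w : ι → ℝ} {K c t₀ t : ℝ} (hw : ∀ i, 1 ≤ w i) (hwK : ∀ i, w i ≤ K)
    (hoff : ∀ z ∈ Ico t₀ t, ∀ i j, i ≠ j → 0 ≤ A z i j)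
    (hAw : ∀ z ∈ Ico t₀ t, ∀ i, (A z *ᵥ w) i ≤ -c * w i)
    (ha : ∀ z ∈ Icc t₀ t, HasDerivAt a (A z *ᵥ a z) z) (ht : t₀ ≤ t) :
    ‖a t‖ ≤ K * Real.exp (-c * (t - t₀)) * ‖a t₀‖ := by
  rcases isEmpty_or_nonempty ι with hι | ⟨⟨i₀⟩⟩
  · simp [Subsingleton.elim (a t) 0, Subsingleton.elim (a t₀) 0]
  have hw0 : ∀ i, 0 < w i := fun i => zero_lt_one.trans_le (hw i)
  set D := diagonal w⁻¹
  have hdecay := norm_le_exp_mul_norm_of_hasDerivAt_mulVec (M := fun z => D * A z * diagonal w)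
    (g := fun z => D *ᵥ a z) (c := c) ?_ ?_ ?_ ht
  · have hK : 0 ≤ K := zero_le_one.trans ((hw i₀).trans (hwK i₀))
    have hup : ‖a t‖ ≤ K * ‖D *ᵥ a t‖ := by
      refine (pi_norm_le_iff_of_nonneg (by positivity)).2 fun i => ?_
      have hi := norm_le_pi_norm (D *ᵥ a t) i
      rw [mulVec_diagonal, Pi.inv_apply, norm_mul, norm_inv, Real.norm_of_nonneg (hw0 i).le,
        inv_mul_le_iff₀ (hw0 i)] at hi
      exact hi.trans (mul_le_mul_of_nonneg_right (hwK i) (norm_nonneg _))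
    have hdown : ‖D *ᵥ a t₀‖ ≤ ‖a t₀‖ := by
      refine (pi_norm_le_iff_of_nonneg (norm_nonneg _)).2 fun i => ?_
      rw [mulVec_diagonal, Pi.inv_apply, norm_mul, norm_inv, Real.norm_of_nonneg (hw0 i).le]
      exact (inv_mul_le_of_le_mul₀ (hw0 i).le (norm_nonneg _)
        (le_mul_of_one_le_left (norm_nonneg _) (hw i))).trans (norm_le_pi_norm _ i)
    calc ‖a t‖ ≤ K * (‖D *ᵥ a t₀‖ * Real.exp (-c * (t - t₀))) :=
          hup.trans (mul_le_mul_of_nonneg_left hdecay hK)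
      _ ≤ K * (‖a t₀‖ * Real.exp (-c * (t - t₀))) := by gcongr
      _ = K * Real.exp (-c * (t - t₀)) * ‖a t₀‖ := by ring
  · intro z hz i j hij
    simpa [D, diagonal_mul, mul_diagonal] using
      mul_nonneg (mul_nonneg (inv_nonneg.2 (hw0 i).le) (hoff z hz i j hij)) (hw0 j).le
  · intro z hz i
    have hrow : ∑ j, (D * A z * diagonal w) i j = (w i)⁻¹ * (A z *ᵥ w) i := by
      simp [D, diagonal_mul, mul_diagonal, mulVec, dotProduct, Finset.mul_sum, mul_assoc]
    rw [hrow, inv_mul_le_iff₀ (hw0 i)]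
    linarith [hAw z hz i]
  · intro z hz
    rw [diagonal_inv_mul_mul_diagonal_mulVec_s9 fun i => (hw0 i).ne']
    refine hasDerivAt_pi.2 fun i => ?_
    simp only [D, mulVec_diagonal]
    exact (hasDerivAt_pi.1 (ha z hz) i).const_mul _

end Metzler

section MeanAge

variable {d : ℕ} {B : ℝ → Matrix (Fin d) (Fin d) ℝ} {s : ℝ → Fin d → ℝ} {x : ℝ → Fin d → ℝ}
  {t : ℝ}

theorem meanAgeMatrix_nonneg_of_ne (hBoff : ∀ i j, i ≠ j → 0 ≤ B t i j)
    (hx : ∀ i, 0 < x t i) {i j : Fin d} (hij : i ≠ j) : 0 ≤ meanAgeMatrix B s x t i j := by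
  simpa [meanAgeMatrix, hij] using div_nonneg (mul_nonneg (hBoff i j hij) (hx j).le) (hx i).le

theorem mul_meanAgeMatrix_mulVec_apply (w : Fin d → ℝ) {i : Fin d} (hxi : x t i ≠ 0) :
    x t i * (meanAgeMatrix B s x t *ᵥ w) i
      = -(s t i * w i) + ∑ j ∈ Finset.univ.erase i, B t i j * x t j * (w j - w i) := by
  rw [mulVec, dotProduct, ← Finset.add_sum_erase _ _ (Finset.mem_univ i)]
  have hoff : ∀ j ∈ Finset.univ.erase i,
      meanAgeMatrix B s x t i j * w j = B t i j * x t j * w j / x t i := fun j hj => by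
    simp [meanAgeMatrix, (Finset.ne_of_mem_erase hj).symm, div_mul_eq_mul_div]
  rw [Finset.sum_congr rfl hoff, ← Finset.sum_div]
  simp only [meanAgeMatrix, of_apply, if_true, mul_sub, Finset.sum_sub_distrib,
    ← Finset.sum_mul]
  field_simp
  ring

def blockWeight {m : ℕ} (π : Fin d → Fin m) (i : Fin d) : ℝ := 2 ^ (π i : ℕ)

theorem one_le_blockWeight {m : ℕ} (π : Fin d → Fin m) (i : Fin d) : 1 ≤ blockWeight π i :=
  one_le_pow₀ one_le_two

theorem blockWeight_le {m : ℕ} (π : Fin d → Fin m) (i : Fin d) : blockWeight π i ≤ 2 ^ m :=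
  pow_le_pow_right₀ one_le_two (π i).2.le

theorem blockWeight_mono {m : ℕ} (π : Fin d → Fin m) {i j : Fin d} (h : π i ≤ π j) :
    blockWeight π i ≤ blockWeight π j :=
  pow_le_pow_right₀ one_le_two h

theorem two_mul_blockWeight_le {m : ℕ} (π : Fin d → Fin m) {i j : Fin d} (h : π i < π j) :
    2 * blockWeight π i ≤ blockWeight π j := by
  rw [blockWeight, blockWeight, ← pow_succ']
  exact pow_le_pow_right₀ one_le_two h

theorem meanAgeMatrix_mulVec_blockWeight_le {m : ℕ} {π : Fin d → Fin m} {δ ε C : ℝ}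
    (hδ : 0 < δ) (hε : 0 < ε) (hx : ∀ i, ε ≤ x t i) (hxC : ∀ i, x t i ≤ C)
    (hs : ∀ i, 0 ≤ s t i) (hBoff : ∀ i j, i ≠ j → 0 ≤ B t i j)
    (htri : ∀ i j, π i < π j → B t i j = 0) (hsδ : ∀ i, (π i : ℕ) = 0 → δ ≤ s t i)
    (hfeed : ∀ i, (π i : ℕ) ≠ 0 → ∃ j, π j < π i ∧ δ ≤ B t i j) (i : Fin d) :
    (meanAgeMatrix B s x t *ᵥ blockWeight π) i ≤ -(δ * min 1 (ε / 2) / C) * blockWeight π i := by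
  set w := blockWeight π
  set η := δ * min 1 (ε / 2)
  have hxi : 0 < x t i := hε.trans_le (hx i)
  have hwi : 0 < w i := zero_lt_one.trans_le (one_le_blockWeight π i)
  have hterm : ∀ j ∈ Finset.univ.erase i, B t i j * x t j * (w j - w i) ≤ 0 := by
    intro j hj
    rcases lt_or_ge (π i) (π j) with hij | hji
    · simp [htri i j hij]
    · exact mul_nonpos_of_nonneg_of_nonpos
        (mul_nonneg (hBoff i j (Finset.ne_of_mem_erase hj).symm) (hε.le.trans (hx j)))
        (sub_nonpos.2 (blockWeight_mono π hji))
  have key : x t i * (meanAgeMatrix B s x t *ᵥ w) i ≤ -(η * w i) := by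
    rw [mul_meanAgeMatrix_mulVec_apply w hxi.ne']
    by_cases hi : (π i : ℕ) = 0
    · have hη : η ≤ δ := mul_le_of_le_one_right hδ.le (min_le_left _ _)
      nlinarith [Finset.sum_nonpos hterm, hsδ i hi]
    · have hη : η ≤ δ * (ε / 2) := mul_le_mul_of_nonneg_left (min_le_right _ _) hδ.le
      obtain ⟨j, hji, hBj⟩ := hfeed i hi
      have hj : j ∈ Finset.univ.erase i :=
        Finset.mem_erase.2 ⟨ne_of_apply_ne π hji.ne, Finset.mem_univ j⟩
      rw [← Finset.add_sum_erase _ _ hj]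
      have hrest : ∑ k ∈ (Finset.univ.erase i).erase j, B t i k * x t k * (w k - w i) ≤ 0 :=
        Finset.sum_nonpos fun k hk => hterm k (Finset.mem_of_mem_erase hk)
      have hfed : δ * ε ≤ B t i j * x t j := mul_le_mul hBj (hx j) hε.le (hδ.le.trans hBj)
      have hgap : w j - w i ≤ -(w i / 2) := by linarith [two_mul_blockWeight_le π hji]
      have hfedterm : B t i j * x t j * (w j - w i) ≤ -(δ * ε / 2 * w i) := by
        nlinarith [mul_le_mul_of_nonneg_left hgap
          (mul_nonneg (hδ.le.trans hBj) (hε.le.trans (hx j)))]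
      nlinarith [mul_nonneg (hs i) hwi.le]
  have hη : 0 ≤ η * w i := by positivity
  calc (meanAgeMatrix B s x t *ᵥ w) i ≤ -(η * w i) / x t i := by
        rw [le_div_iff₀ hxi, mul_comm]; exact key
    _ ≤ -(η * w i / C) := by
        rw [neg_div]; exact neg_le_neg (div_le_div_of_nonneg_left hη hxi (hxC i))
    _ = -(η / C) * w i := by ring

end MeanAge

theorem stmt_9_general (d m : ℕ) (τ : EReal)
    (B : ℝ → Matrix (Fin d) (Fin d) ℝ) (s : ℝ → (Fin d → ℝ))
    (hsnn : ∀ t : ℝ, τ < (t : EReal) → ∀ i : Fin d, 0 ≤ s t i)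
    -- `B(t)` is a compartmental matrix:
    (hBoff : ∀ t : ℝ, τ < (t : EReal) → ∀ i j : Fin d, i ≠ j → 0 ≤ B t i j)
    -- `x` is a solution with positive, bounded entries, bounded away from zero:
    (x : ℝ → Fin d → ℝ)
    (hxbdd : ∃ C : ℝ, ∀ t : ℝ, τ < (t : EReal) → ∀ i : Fin d, x t i ≤ C)
    (hxlow : ∃ ε : ℝ, 0 < ε ∧ ∀ t : ℝ, τ < (t : EReal) → ∀ i : Fin d, ε ≤ x t i)
    -- the block structure:
    (π : Fin d → Fin m)
    (htri : ∀ t : ℝ, τ < (t : EReal) → ∀ i j : Fin d, π i < π j → B t i j = 0)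
    (δ : ℝ) (hδ : 0 < δ)
    -- input at least `δ` into the first block:
    (hsδ : ∀ i : Fin d, (π i : ℕ) = 0 → ∀ t : ℝ, τ < (t : EReal) → δ ≤ s t i)
    -- every pool in a later block is fed from an earlier block at rate at least `δ`:
    (hfeed : ∀ i : Fin d, (π i : ℕ) ≠ 0 →
      ∃ j : Fin d, π j < π i ∧ ∀ t : ℝ, τ < (t : EReal) → δ ≤ B t i j) :
    ∃ K δbar : ℝ, 1 ≤ K ∧ 0 < δbar ∧ δbar < δ ∧
      ∀ a : ℝ → (Fin d → ℝ),
        (∀ t : ℝ, τ < (t : EReal) →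
          HasDerivAt a ((meanAgeMatrix B s x t).mulVec (a t)) t) →
        ∀ t₀ t : ℝ, τ < (t₀ : EReal) → t₀ ≤ t →
          ‖a t‖ ≤ K * Real.exp (-δbar * (t - t₀)) * ‖a t₀‖ := by
  obtain ⟨C, hC⟩ := hxbdd
  obtain ⟨ε, hε, hεx⟩ := hxlow
  set δbar := min (δ * min 1 (ε / 2) / max C 1) (δ / 2)
  refine ⟨2 ^ m, δbar, one_le_pow₀ one_le_two, by positivity,
    (min_le_right _ _).trans_lt (by linarith), fun a ha t₀ t ht₀ ht => ?_⟩
  have hI : ∀ z, t₀ ≤ z → τ < (z : EReal) := fun z hz =>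
    ht₀.trans_le (EReal.coe_le_coe_iff.2 hz)
  refine norm_le_mul_exp_mul_norm_of_mulVec_weight_le (one_le_blockWeight π) (blockWeight_le π)
    (fun z hz i j hij => meanAgeMatrix_nonneg_of_ne (hBoff z (hI z hz.1))
      (fun k => hε.trans_le (hεx z (hI z hz.1) k)) hij)
    (fun z hz i => ?_) (fun z hz => ha z (hI z hz.1)) ht
  have hz := hI z hz.1
  refine (meanAgeMatrix_mulVec_blockWeight_le hδ hε (hεx z hz)
    (fun k => (hC z hz k).trans (le_max_left C 1)) (hsnn z hz) (hBoff z hz) (htri z hz)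
    (fun k hk => hsδ k hk z hz) (fun k hk => (hfeed k hk).imp fun j hj => ⟨hj.1, hj.2 z hz⟩)
    i).trans <| mul_le_mul_of_nonneg_right (neg_le_neg (min_le_left _ _))
      (zero_le_one.trans (one_le_blockWeight π i))

/-- exponential stability of the mean age system.
For a nonautonomous compartmental system in block lower triangular form with strictly
diagonally dominant diagonal blocks (constant `δ`), input at least `δ` into the first
block and feeding at rate at least `δ` into every later block, and a positive bounded
solution `x` bounded away from zero, the homogeneous mean age system `ȧ = A(t)a` is
exponentially stable: there exist `K̄ ≥ 1` and `δ̄ ∈ (0,δ)` such that every solution `a`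
satisfies `‖a(t)‖ ≤ K̄ e^{-δ̄(t-t₀)} ‖a(t₀)‖` for all `t ≥ t₀ > τ`. -/
theorem stmt_9 (d m : ℕ) (τ : EReal) (hτ : τ ≠ ⊤)
    (B : ℝ → Matrix (Fin d) (Fin d) ℝ) (s : ℝ → (Fin d → ℝ))
    (hBcont : ContinuousOn B {t : ℝ | τ < (t : EReal)})
    (hBbdd : ∃ C : ℝ, ∀ t : ℝ, τ < (t : EReal) → ∀ i j : Fin d, |B t i j| ≤ C)
    (hscont : ContinuousOn s {t : ℝ | τ < (t : EReal)})
    (hsbdd : ∃ C : ℝ, ∀ t : ℝ, τ < (t : EReal) → ‖s t‖ ≤ C)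
    (hsnn : ∀ t : ℝ, τ < (t : EReal) → ∀ i : Fin d, 0 ≤ s t i)
    -- `B(t)` is a compartmental matrix:
    (hBdiag : ∀ t : ℝ, τ < (t : EReal) → ∀ i : Fin d, B t i i < 0)
    (hBoff : ∀ t : ℝ, τ < (t : EReal) → ∀ i j : Fin d, i ≠ j → 0 ≤ B t i j)
    (hBcol : ∀ t : ℝ, τ < (t : EReal) → ∀ j : Fin d, ∑ i, B t i j ≤ 0)
    -- `x` is a solution with positive, bounded entries, bounded away from zero:
    (x : ℝ → Fin d → ℝ)
    (hxsol : ∀ t : ℝ, τ < (t : EReal) → HasDerivAt x ((B t).mulVec (x t) + s t) t)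
    (hxbdd : ∃ C : ℝ, ∀ t : ℝ, τ < (t : EReal) → ∀ i : Fin d, x t i ≤ C)
    (hxlow : ∃ ε : ℝ, 0 < ε ∧ ∀ t : ℝ, τ < (t : EReal) → ∀ i : Fin d, ε ≤ x t i)
    -- the block structure:
    (π : Fin d → Fin m) (hπmono : Monotone π) (hπsurj : Function.Surjective π)
    (htri : ∀ t : ℝ, τ < (t : EReal) → ∀ i j : Fin d, π i < π j → B t i j = 0)
    (δ : ℝ) (hδ : 0 < δ)
    (hoff : ∀ t : ℝ, τ < (t : EReal) → ∀ i j : Fin d, i ≠ j → π i = π j → 0 ≤ B t i j)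
    (hrow : ∀ t : ℝ, τ < (t : EReal) → ∀ i : Fin d,
      ∑ j ∈ Finset.univ.filter (fun j => π j = π i), B t i j ≤ -δ)
    -- input at least `δ` into the first block:
    (hsδ : ∀ i : Fin d, (π i : ℕ) = 0 → ∀ t : ℝ, τ < (t : EReal) → δ ≤ s t i)
    -- every pool in a later block is fed from an earlier block at rate at least `δ`:
    (hfeed : ∀ i : Fin d, (π i : ℕ) ≠ 0 →
      ∃ j : Fin d, π j < π i ∧ ∀ t : ℝ, τ < (t : EReal) → δ ≤ B t i j) :
    ∃ K δbar : ℝ, 1 ≤ K ∧ 0 < δbar ∧ δbar < δ ∧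
      ∀ a : ℝ → (Fin d → ℝ),
        (∀ t : ℝ, τ < (t : EReal) →
          HasDerivAt a ((meanAgeMatrix B s x t).mulVec (a t)) t) →
        ∀ t₀ t : ℝ, τ < (t₀ : EReal) → t₀ ≤ t →
          ‖a t‖ ≤ K * Real.exp (-δbar * (t - t₀)) * ‖a t₀‖ :=
  stmt_9_general d m τ B s hsnn hBoff x hxbdd hxlow π htri δ hδ hsδ hfeed
end

section
/- Let B ∈ ℝ^{d×d} be an invertible matrix with entries b_{ij}, let 0 ≠ s ∈ ℝ^d with s ≥ 0 componentwise and Σ_i s_i > 0, and suppose x* := −B⁻¹s has all entries positive. Let X* := diag(x*₁,…,x*_d), ā* := −(X*)⁻¹ B⁻¹ X* (1,…,1)ᵀ, and β := s / (Σ_{i=1}^{d} s_i). If Σ_{i=1}^{d} x*_i Σ_{j=1}^{d} b_{ji} ≠ 0, then the transit time of the equilibrium solution, R := (Σ_{i=1}^{d} ā*_i x*_i Σ_{j=1}^{d} b_{ji}) / (Σ_{i=1}^{d} x*_i Σ_{j=1}^{d} b_{ji}), satisfies R = −(1,…,1) B⁻¹ β. -/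
/-!
The column sums of `B` form the row vector `1ᵀB`, so weighting the entries of `B⁻¹v` by them
gives back `∑ vᵢ`. Since `ā*ᵢ x*ᵢ = -(B⁻¹x*)ᵢ` and `x* = B⁻¹(-s)`, this evaluates the numerator
of the transit time as `-∑ x*ᵢ` and the denominator as `-∑ sᵢ`; and `B⁻¹β = -x* / ∑ sᵢ`.
-/

open Matrix Finset

section

variable {n : Type*} [Fintype n] [DecidableEq n]

theorem sum_nonsing_inv_mulVec_mul_sum_col {R : Type*} [CommRing R] {A : Matrix n n R}
    (hA : IsUnit A.det) (v : n → R) :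
    ∑ i, (A⁻¹ *ᵥ v) i * ∑ j, A j i = ∑ i, v i := by
  have h := dotProduct_mulVec (1 : n → R) A (A⁻¹ *ᵥ v)
  rw [mulVec_mulVec, mul_nonsing_inv _ hA, one_mulVec] at h
  simpa [dotProduct, vecMul, mul_comm] using h.symm

theorem diagonal_inv_mul_mul_diagonal_mulVec_one_mul {K : Type*} [Field K] {x : n → K}
    (hx : ∀ i, x i ≠ 0) (A : Matrix n n K) (i : n) :
    (((diagonal x)⁻¹ * A * diagonal x) *ᵥ 1) i * x i = (A *ᵥ x) i := by
  have hinv : (diagonal x)⁻¹ = diagonal x⁻¹ :=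
    inv_eq_left_inv <| by simp [diagonal_mul_diagonal, inv_mul_cancel₀ (hx _)]
  have hx1 : diagonal x *ᵥ 1 = x := funext fun j => by simp [mulVec_diagonal]
  rw [hinv, ← mulVec_mulVec, ← mulVec_mulVec, hx1, mulVec_diagonal, Pi.inv_apply,
    mul_right_comm, inv_mul_cancel₀ (hx i), one_mul]

end

theorem stmt_11_general (d : ℕ) (B : Matrix (Fin d) (Fin d) ℝ) (hB : IsUnit B.det)
    (s : Fin d → ℝ)
    (xstar : Fin d → ℝ) (hxstar : xstar = -(B⁻¹.mulVec s))
    (hxpos : ∀ i, 0 < xstar i)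
    (Xstar : Matrix (Fin d) (Fin d) ℝ) (hXstar : Xstar = Matrix.diagonal xstar)
    (abarstar : Fin d → ℝ)
    (habar : abarstar = -((Xstar⁻¹ * B⁻¹ * Xstar).mulVec 1))
    (β : Fin d → ℝ) (hβ : ∀ i, β i = s i / ∑ j, s j) :
    (∑ i, abarstar i * xstar i * ∑ j, B j i) / (∑ i, xstar i * ∑ j, B j i)
      = -∑ i, B⁻¹.mulVec β i := by
  have hnum : ∑ i, abarstar i * xstar i * ∑ j, B j i = -∑ i, xstar i := by
    calc ∑ i, abarstar i * xstar i * ∑ j, B j i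
        = ∑ i, (B⁻¹ *ᵥ -xstar) i * ∑ j, B j i := by
          refine sum_congr rfl fun i _ => ?_
          rw [habar, hXstar, mulVec_neg, Pi.neg_apply, Pi.neg_apply, neg_mul,
            diagonal_inv_mul_mul_diagonal_mulVec_one_mul (fun i => (hxpos i).ne') B⁻¹ i]
      _ = -∑ i, xstar i := by
          rw [sum_nonsing_inv_mulVec_mul_sum_col hB]
          simp only [Pi.neg_apply, sum_neg_distrib]
  have hdenom : ∑ i, xstar i * ∑ j, B j i = -∑ i, s i := by
    rw [hxstar, ← mulVec_neg, sum_nonsing_inv_mulVec_mul_sum_col hB]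
    simp only [Pi.neg_apply, sum_neg_distrib]
  have hBβ : B⁻¹ *ᵥ β = -(∑ i, s i)⁻¹ • xstar := by
    have hβs : β = (∑ i, s i)⁻¹ • s :=
      funext fun i => by rw [hβ, Pi.smul_apply, smul_eq_mul, div_eq_inv_mul]
    rw [hβs, mulVec_smul, hxstar, smul_neg, neg_smul, neg_neg]
  rw [hnum, hdenom, hBβ]
  simp [← mul_sum, div_eq_inv_mul]

/-- autonomous transit time formula.
For an invertible `B`, `0 ≠ s ≥ 0` with `∑ sᵢ > 0`, positive equilibrium `x* = −B⁻¹s`,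
equilibrium mean ages `ā* = −(X*)⁻¹B⁻¹X*(1,…,1)ᵀ` and input fractions `β = s/∑ sᵢ`, if the
denominator `∑ᵢ x*ᵢ ∑ⱼ bⱼᵢ` is nonzero, then the transit time
`R = (∑ᵢ ā*ᵢ x*ᵢ ∑ⱼ bⱼᵢ)/(∑ᵢ x*ᵢ ∑ⱼ bⱼᵢ)` equals `−(1,…,1)B⁻¹β`. -/
theorem stmt_11 (d : ℕ) (B : Matrix (Fin d) (Fin d) ℝ) (hB : IsUnit B.det)
    (s : Fin d → ℝ) (hs : ∀ i, 0 ≤ s i) (hsne : s ≠ 0)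
    (hssum : 0 < ∑ i, s i)
    (xstar : Fin d → ℝ) (hxstar : xstar = -(B⁻¹.mulVec s))
    (hxpos : ∀ i, 0 < xstar i)
    (Xstar : Matrix (Fin d) (Fin d) ℝ) (hXstar : Xstar = Matrix.diagonal xstar)
    (abarstar : Fin d → ℝ)
    (habar : abarstar = -((Xstar⁻¹ * B⁻¹ * Xstar).mulVec 1))
    (β : Fin d → ℝ) (hβ : ∀ i, β i = s i / ∑ j, s j)
    (hden : (∑ i, xstar i * ∑ j, B j i) ≠ 0) :
    (∑ i, abarstar i * xstar i * ∑ j, B j i) / (∑ i, xstar i * ∑ j, B j i)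
      = -∑ i, B⁻¹.mulVec β i :=
  stmt_11_general d B hB s xstar hxstar hxpos Xstar hXstar abarstar habar β hβ
end
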